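/- arXiv:1811.08336 — 3 statements merged into one kernel-verified Lean document; each statement's English description precedes it below -/
import Mathlib

section
/- All the rate constants a_j, b_j, c_j (1 ≤ j ≤ L) of the fixed connected component can be identified from the derivatives s_L^{(ℓ)} with 1 ≤ ℓ ≤ max{2, 2L−1}; that is, the map sending the vector of all rate constants of the network to (a_1,…,a_L, b_1,…,b_L, c_1,…,c_L) is identifiable from the single variable s_L with D = max{2, 2L−1}. -/
open MvPolynomial Finsupp

variable {σ : Type*}

/-- The total (Lie) derivative of a polynomial `φ` associated to the polynomial vector
field `f`: `φ̇ = Σ_x (∂φ/∂x)·f x`. -/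
noncomputable def lieD [Fintype σ] (f : σ → MvPolynomial σ ℝ)
    (φ : MvPolynomial σ ℝ) : MvPolynomial σ ℝ :=
  ∑ x : σ, MvPolynomial.pderiv x φ * f x

/-- Iterated total (Lie) derivative. -/
noncomputable def lieDIter [Fintype σ] (f : σ → MvPolynomial σ ℝ) :
    ℕ → MvPolynomial σ ℝ → MvPolynomial σ ℝ
  | 0, φ => φ
  | n + 1, φ => lieD f (lieDIter f n φ)

/-- Indicator of a species inside a complex, as a real number. -/
def ind [DecidableEq σ] (a x : σ) : ℝ := if a = x then 1 else 0

/-- A chemical reaction network of the structural form of Assumption 1: the connected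
components are indexed by `ι`; component `i` is
`Y i + S i 0 ⇄ U i 1 → Y i + S i 1 ⇄ U i 2 → ⋯ ⇄ U i (L i) → Y i + S i (L i)`,
with rate constants `a_{i,j}, b_{i,j}, c_{i,j}` for the reactions
`Y i + S i (j-1) → U i j`, `U i j → Y i + S i (j-1)`, `U i j → Y i + S i j`
(`1 ≤ j ≤ L i`). Only the values `S i j` for `j ≤ L i` and `U i j` for
`1 ≤ j ≤ L i` are relevant. -/
structure A1Network (σ : Type*) where
  ι : Type
  [fintypeι : Fintype ι]
  L : ι → ℕ
  Lpos : ∀ i, 1 ≤ L i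
  Y : ι → σ
  S : ι → ℕ → σ
  U : ι → ℕ → σ

attribute [instance] A1Network.fintypeι

namespace A1Network

variable [Fintype σ] [DecidableEq σ]

/-- Rate-constant index: component `i`, block `j+1` (for `j : Fin (L i)`), and
`0, 1, 2` for the constants `a, b, c` of the block. -/
def Param (N : A1Network σ) : Type := (i : N.ι) × Fin (N.L i) × Fin 3

instance (N : A1Network σ) : Fintype N.Param :=
  inferInstanceAs (Fintype ((i : N.ι) × Fin (N.L i) × Fin 3))

/-- `x` is an intermediate species of the network. -/
def inter (N : A1Network σ) (x : σ) : Prop :=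
  ∃ i, ∃ j : Fin (N.L i), x = N.U i ((j : ℕ) + 1)

/-- The non-intermediate `x₁` reacts with the non-intermediate `x₂`
(a reaction `x₁ + x₂ → U` exists). -/
def reactsWith (N : A1Network σ) (x₁ x₂ : σ) : Prop :=
  ∃ i, ∃ j : Fin (N.L i),
    (x₁ = N.Y i ∧ x₂ = N.S i (j : ℕ)) ∨ (x₂ = N.Y i ∧ x₁ = N.S i (j : ℕ))

/-- The intermediate `u` reacts to the non-intermediate `x`
(a reaction `u → x + X₂` exists). -/
def reactsTo (N : A1Network σ) (u x : σ) : Prop :=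
  ∃ i, ∃ j : Fin (N.L i), u = N.U i ((j : ℕ) + 1) ∧
    (x = N.Y i ∨ x = N.S i (j : ℕ) ∨ x = N.S i ((j : ℕ) + 1))

/-- The distinctness/uniqueness requirements of Assumption 1: the intermediates of the
entire network are pairwise distinct and distinct from all non-intermediates; the
non-intermediates of one component are pairwise distinct; each complex lies in a
unique connected component. -/
structure Assumption1 (N : A1Network σ) : Prop where
  U_inj : ∀ i (j : Fin (N.L i)) i' (j' : Fin (N.L i')),
    N.U i ((j : ℕ) + 1) = N.U i' ((j' : ℕ) + 1) → i = i' ∧ (j : ℕ) = (j' : ℕ)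
  U_ne_Y : ∀ i (j : Fin (N.L i)) i', N.U i ((j : ℕ) + 1) ≠ N.Y i'
  U_ne_S : ∀ i (j : Fin (N.L i)) i' j', j' ≤ N.L i' → N.U i ((j : ℕ) + 1) ≠ N.S i' j'
  S_inj : ∀ i j j', j ≤ N.L i → j' ≤ N.L i → N.S i j = N.S i j' → j = j'
  complex_unique : ∀ i i' j j', j ≤ N.L i → j' ≤ N.L i' →
    (∀ x : σ, ind (N.Y i) x + ind (N.S i j) x = ind (N.Y i') x + ind (N.S i' j') x) →
    i = i'

/-- `part` is a partition of the species as in Assumption 2: intermediates form class `0`;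
all the substrates and products of a component lie in one class `α ≥ 1` which contains
neither the enzyme of the component nor any intermediate. -/
def IsPartition (N : A1Network σ) (part : σ → ℕ) : Prop :=
  (∀ x, N.inter x → part x = 0) ∧
  (∀ i : N.ι, ∃ α, 1 ≤ α ∧ (∀ j, j ≤ N.L i → part (N.S i j) = α) ∧
    part (N.Y i) ≠ α ∧ part (N.Y i) ≠ 0)

/-- Assumption 2: there exists a partition as above. -/
def Assumption2 (N : A1Network σ) : Prop := ∃ part, N.IsPartition part

/-- The mass-action right-hand side of the induced dynamical system:
`ẋ = Σ_{y→y'} k_{yy'} x^y (y'-y)`. -/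
noncomputable def rhs (N : A1Network σ) (k : N.Param → ℝ) (x : σ) : MvPolynomial σ ℝ :=
  ∑ i : N.ι, ∑ j : Fin (N.L i),
    (C (k ⟨i, j, 0⟩ *
          (ind (N.U i ((j : ℕ) + 1)) x - ind (N.Y i) x - ind (N.S i (j : ℕ)) x)) *
        (X (N.Y i) * X (N.S i (j : ℕ)))
      + C (k ⟨i, j, 1⟩ *
          (ind (N.Y i) x + ind (N.S i (j : ℕ)) x - ind (N.U i ((j : ℕ) + 1)) x)) *
        X (N.U i ((j : ℕ) + 1))
      + C (k ⟨i, j, 2⟩ *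
          (ind (N.Y i) x + ind (N.S i ((j : ℕ) + 1)) x - ind (N.U i ((j : ℕ) + 1)) x)) *
        X (N.U i ((j : ℕ) + 1)))

/-- `x^{(ℓ)}(x, k)`: the `ℓ`-th iterated total derivative of the variable `x`. -/
noncomputable def deriv (N : A1Network σ) (k : N.Param → ℝ) (ℓ : ℕ) (x : σ) :
    MvPolynomial σ ℝ :=
  lieDIter (N.rhs k) ℓ (X x)

/-- The map `ψ` on rate constants is identifiable from the set of variables `T` with `D`
derivatives: whenever two positive rate vectors give the same derivatives
`x^{(ℓ)}`, `1 ≤ ℓ ≤ D`, `x ∈ T`, as polynomials, the values of `ψ` agree. -/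
def IdentifiableFrom {α : Type*} (N : A1Network σ) (ψ : (N.Param → ℝ) → α)
    (T : Set σ) (D : ℕ) : Prop :=
  ∀ k₁ k₂ : N.Param → ℝ, (∀ r, 0 < k₁ r) → (∀ r, 0 < k₂ r) →
    (∀ x ∈ T, ∀ ℓ, 1 ≤ ℓ → ℓ ≤ D → N.deriv k₁ ℓ x = N.deriv k₂ ℓ x) →
    ψ k₁ = ψ k₂

end A1Network

/-!
Write `φ_ℓ = s_L^{(ℓ)}`. Going down the chain, `φ_{2m}` contains `y^m s_{L-m}` with coefficient
`P_m = ∏_{q<m} c_{L-q} a_{L-q}` and `φ_{2m+1}` contains `y^m u_{L-m}` with coefficient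
`P_m c_{L-m}`, while in `φ_{2m+2}` the coefficient of `y^m u_{L-m}` is `c_{L-m}` times that of
`y^m s_{L-m}` minus `b_{L-m} + c_{L-m}` times that of `y^m u_{L-m}`, both read in `φ_{2m+1}`.
Only these predecessors contribute because of integer weights on the species for which every
reaction raises the weight of a monomial by at most `20` per derivative: monomials of weight above
`w(s_L) + 20ℓ` do not occur in `φ_ℓ`. As all these coefficients are observed and `P_m > 0`, the
rate constants of block `j` are identified from derivatives of order at most `2(L - j + 1)`, which
exceeds `2L - 1` only for `a_1, b_1` when `L ≥ 2`. Those two are read off at order `3` instead: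
`y s_{L-1} s_0` has coefficient `-a_1 P_1` and `s_{L-1} u_1` has coefficient `(b_1 + c_1) P_1`,
each isolated by a weight of its own.
-/

section Weights

variable {f : σ → MvPolynomial σ ℝ} {φ : MvPolynomial σ ℝ} {w : σ → ℤ} {B δ : ℤ}

theorem coeff_pderiv_eq_zero_of_weight (hφ : ∀ d, B < weight w d → coeff d φ = 0) {x : σ}
    {d : σ →₀ ℕ} (hd : B < weight w d + w x) : coeff d (pderiv x φ) = 0 := by
  rw [coeff_pderiv, hφ _ (by simpa [weight_single] using hd), zero_mul]

variable [Fintype σ]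

theorem coeff_lieD_eq_zero_of_weight (hf : ∀ x d, w x + δ < weight w d → coeff d (f x) = 0)
    (hφ : ∀ d, B < weight w d → coeff d φ = 0) {e : σ →₀ ℕ} (he : B + δ < weight w e) :
    coeff e (lieD f φ) = 0 := by
  classical
  rw [lieD, coeff_sum]
  refine Finset.sum_eq_zero fun x _ => ?_
  rw [coeff_mul]
  refine Finset.sum_eq_zero fun p hp => ?_
  have hsum : weight w p.1 + weight w p.2 = weight w e := by
    rw [← map_add, Finset.HasAntidiagonal.mem_antidiagonal.mp hp]
  by_cases h : B < weight w p.1 + w x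
  · rw [coeff_pderiv_eq_zero_of_weight hφ h, zero_mul]
  · rw [hf x p.2 (by linarith), mul_zero]

theorem coeff_lieDIter_eq_zero_of_weight
    (hf : ∀ x d, w x + δ < weight w d → coeff d (f x) = 0)
    (hφ : ∀ d, B < weight w d → coeff d φ = 0) (ℓ : ℕ) {e : σ →₀ ℕ}
    (he : B + ℓ * δ < weight w e) : coeff e (lieDIter f ℓ φ) = 0 := by
  induction ℓ generalizing e with
  | zero => exact hφ e (by simpa using he)
  | succ ℓ ih =>
    exact coeff_lieD_eq_zero_of_weight hf (fun d hd => ih hd) (by push_cast at he; linarith)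

end Weights

theorem Finsupp.eq_or_eq_of_single_add_single_apply_ne_zero {a b x : σ} {m n : ℕ}
    (h : (single a m + single b n) x ≠ 0) : x = a ∨ x = b := by
  contrapose! h
  simp [Ne.symm h.1, Ne.symm h.2]

theorem Finsupp.not_single_one_le_of_apply_eq_zero {x : σ} {e : σ →₀ ℕ} (h : e x = 0) :
    ¬ single x 1 ≤ e := by
  rw [single_le_iff, h]
  exact one_ne_zero ∘ Nat.le_zero.mp

theorem exists_fin_eq_add_one {n r : ℕ} (h1 : 1 ≤ r) (h2 : r ≤ n) : ∃ j : Fin n, r = j + 1 :=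
  ⟨⟨r - 1, by omega⟩, by simp; omega⟩

namespace A1Network

section Component

variable (N : A1Network σ) (i₀ : N.ι)

noncomputable def bindingComplex (i : N.ι) (n : ℕ) : σ →₀ ℕ :=
  single (N.Y i) 1 + single (N.S i n) 1

def InComponent (x : σ) : Prop :=
  x = N.Y i₀ ∨ (∃ r ≤ N.L i₀, x = N.S i₀ r) ∨ ∃ r, 1 ≤ r ∧ r ≤ N.L i₀ ∧ x = N.U i₀ r

/-- What the proof uses of Assumptions 1 and 2. -/
structure Separated : Prop where
  Y_ne_S {r : ℕ} : r ≤ N.L i₀ → N.Y i₀ ≠ N.S i₀ r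
  Y_ne_U (i : N.ι) {r : ℕ} : 1 ≤ r → r ≤ N.L i₀ → N.Y i ≠ N.U i₀ r
  S_ne_U (i : N.ι) {j r : ℕ} : j ≤ N.L i → 1 ≤ r → r ≤ N.L i₀ → N.S i j ≠ N.U i₀ r
  S_injOn {r r' : ℕ} : r ≤ N.L i₀ → r' ≤ N.L i₀ → N.S i₀ r = N.S i₀ r' → r = r'
  U_injOn {r r' : ℕ} : 1 ≤ r → r ≤ N.L i₀ → 1 ≤ r' → r' ≤ N.L i₀ →
    N.U i₀ r = N.U i₀ r' → r = r'
  not_inComponent_S {i : N.ι} {j : ℕ} : i ≠ i₀ → j < N.L i →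
    N.InComponent i₀ (N.Y i) → ¬ N.InComponent i₀ (N.S i j)
  eq_of_inComponent_U {i : N.ι} {j : ℕ} : j < N.L i → N.InComponent i₀ (N.U i (j + 1)) → i = i₀

/-- `a_{n+1}, b_{n+1}, c_{n+1}` of the component for `t = 0, 1, 2`; the junk value `1` for
`n ≥ L` keeps it positive. -/
noncomputable def rate (k : N.Param → ℝ) (t : Fin 3) (n : ℕ) : ℝ :=
  if h : n < N.L i₀ then k ⟨i₀, ⟨n, h⟩, t⟩ else 1

noncomputable def chainProd (k : N.Param → ℝ) (m : ℕ) : ℝ :=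
  ∏ q ∈ Finset.range m, N.rate i₀ k 2 (N.L i₀ - 1 - q) * N.rate i₀ k 0 (N.L i₀ - 1 - q)

noncomputable def monoS (m : ℕ) : σ →₀ ℕ := single (N.Y i₀) m + single (N.S i₀ (N.L i₀ - m)) 1

noncomputable def monoU (m : ℕ) : σ →₀ ℕ := single (N.Y i₀) m + single (N.U i₀ (N.L i₀ - m)) 1

open Classical in
noncomputable def componentWeight (η A : ℤ) (ρ τ : ℕ → ℤ) (x : σ) : ℤ :=
  if x = N.Y i₀ then η
  else if h : ∃ r ≤ N.L i₀, x = N.S i₀ r then ρ h.choose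
  else if h : ∃ r, 1 ≤ r ∧ r ≤ N.L i₀ ∧ x = N.U i₀ r then τ h.choose else A

structure AdmissibleWeights (η A : ℤ) (ρ τ : ℕ → ℤ) : Prop where
  le_Y : A ≤ η
  Y_le : η ≤ 20
  le_S : ∀ r ≤ N.L i₀, A ≤ ρ r
  S_le : ∀ r ≤ N.L i₀, ρ r ≤ 20
  le_U : ∀ r, 1 ≤ r → r ≤ N.L i₀ → A ≤ τ r
  bind : ∀ n < N.L i₀, η + ρ n ≤ τ (n + 1) + 20
  unbind_Y : ∀ n < N.L i₀, τ (n + 1) ≤ η + 20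
  unbind_S : ∀ n < N.L i₀, τ (n + 1) ≤ ρ n + 20
  unbind_S_succ : ∀ n < N.L i₀, τ (n + 1) ≤ ρ (n + 1) + 20

-- Along the chain `s_L → u_L → y s_{L-1} → ⋯` every derivative raises the weight by exactly
-- `20`; the other two designs also make the replacement of `y` by `y s_0` (rate `a_1`), resp. by
-- `u_1` (rate `b_1 + c_1`), raise it by `20`.
theorem admissibleWeights_chain :
    N.AdmissibleWeights i₀ 18 (-22 * N.L i₀) (fun r => 19 - 22 * r) (fun r => 39 - 22 * r) := by
  constructor <;> intros <;> push_cast <;> omega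

theorem admissibleWeights_bind_first :
    N.AdmissibleWeights i₀ 18 (-22 * N.L i₀) (fun r => if r = 0 then 20 else 32 - 22 * r)
      (fun r => if r = 1 then 25 else 52 - 22 * r) := by
  constructor <;> intros <;> (try split_ifs) <;> push_cast <;> omega

theorem admissibleWeights_unbind_first :
    N.AdmissibleWeights i₀ 18 (-22 * N.L i₀) (fun r => if r = 0 then 19 else 41 - 22 * r)
      (fun r => if r = 1 then 38 else 61 - 22 * r) := by
  constructor <;> intros <;> (try split_ifs) <;> push_cast <;> omega

variable {N i₀}

theorem inComponent_Y : N.InComponent i₀ (N.Y i₀) := Or.inl rfl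

theorem inComponent_S {r : ℕ} (hr : r ≤ N.L i₀) : N.InComponent i₀ (N.S i₀ r) :=
  Or.inr (Or.inl ⟨r, hr, rfl⟩)

theorem inComponent_U {r : ℕ} (hr1 : 1 ≤ r) (hr : r ≤ N.L i₀) : N.InComponent i₀ (N.U i₀ r) :=
  Or.inr (Or.inr ⟨r, hr1, hr, rfl⟩)

theorem inComponent_of_pair {a b : σ} {m n : ℕ} (ha : N.InComponent i₀ a)
    (hb : N.InComponent i₀ b) (x : σ) (h : (single a m + single b n) x ≠ 0) :
    N.InComponent i₀ x := by
  rcases eq_or_eq_of_single_add_single_apply_ne_zero h with rfl | rfl <;> assumption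

theorem inComponent_of_triple {a b c : σ} {m n p : ℕ} (ha : N.InComponent i₀ a)
    (hb : N.InComponent i₀ b) (hc : N.InComponent i₀ c) (x : σ)
    (h : (single a m + single b n + single c p) x ≠ 0) : N.InComponent i₀ x := by
  classical
  by_cases hx : x = c
  · exact hx ▸ hc
  · refine inComponent_of_pair (m := m) (n := n) ha hb x fun h' => h ?_
    rw [Finsupp.add_apply, h', single_apply, if_neg (Ne.symm hx), add_zero]

theorem not_bindingComplex_le_of_Y {i : N.ι} {n : ℕ} {e : σ →₀ ℕ} (h : e (N.Y i) = 0) :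
    ¬ N.bindingComplex i n ≤ e :=
  fun h' => not_single_one_le_of_apply_eq_zero h ((le_add_right le_rfl).trans h')

theorem not_bindingComplex_le_of_S {i : N.ι} {n : ℕ} {e : σ →₀ ℕ} (h : e (N.S i n) = 0) :
    ¬ N.bindingComplex i n ≤ e :=
  fun h' => not_single_one_le_of_apply_eq_zero h ((le_add_left le_rfl).trans h')

theorem rate_pos {k : N.Param → ℝ} (hk : ∀ r, 0 < k r) (t : Fin 3) (n : ℕ) :
    0 < N.rate i₀ k t n := by
  unfold rate
  split_ifs
  exacts [hk _, one_pos]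

theorem chainProd_pos {k : N.Param → ℝ} (hk : ∀ r, 0 < k r) (m : ℕ) : 0 < N.chainProd i₀ k m :=
  Finset.prod_pos fun _ _ => mul_pos (rate_pos hk _ _) (rate_pos hk _ _)

variable {η A : ℤ} {ρ τ : ℕ → ℤ}

theorem componentWeight_Y : N.componentWeight i₀ η A ρ τ (N.Y i₀) = η := if_pos rfl

theorem componentWeight_of_not_inComponent {x : σ} (hx : ¬ N.InComponent i₀ x) :
    N.componentWeight i₀ η A ρ τ x = A := by
  simp only [InComponent, not_or] at hx
  rw [componentWeight, if_neg hx.1, dif_neg hx.2.1, dif_neg hx.2.2]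

namespace Separated

variable (hN : N.Separated i₀)
include hN

theorem S_ne_Y {r : ℕ} (hr : r ≤ N.L i₀) : N.S i₀ r ≠ N.Y i₀ := (hN.Y_ne_S hr).symm

theorem U_ne_Y {r : ℕ} (hr1 : 1 ≤ r) (hr : r ≤ N.L i₀) : N.U i₀ r ≠ N.Y i₀ :=
  (hN.Y_ne_U i₀ hr1 hr).symm

theorem U_ne_S {j r : ℕ} (hj : j ≤ N.L i₀) (hr1 : 1 ≤ r) (hr : r ≤ N.L i₀) :
    N.U i₀ r ≠ N.S i₀ j :=
  (hN.S_ne_U i₀ hj hr1 hr).symm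

theorem S_inj_iff {r r' : ℕ} (hr : r ≤ N.L i₀) (hr' : r' ≤ N.L i₀) :
    N.S i₀ r = N.S i₀ r' ↔ r = r' :=
  ⟨hN.S_injOn hr hr', fun h => h ▸ rfl⟩

theorem U_inj_iff {r r' : ℕ} (hr1 : 1 ≤ r) (hr : r ≤ N.L i₀) (hr1' : 1 ≤ r')
    (hr' : r' ≤ N.L i₀) : N.U i₀ r = N.U i₀ r' ↔ r = r' :=
  ⟨hN.U_injOn hr1 hr hr1' hr', fun h => h ▸ rfl⟩

theorem componentWeight_S {n : ℕ} (hn : n ≤ N.L i₀) :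
    N.componentWeight i₀ η A ρ τ (N.S i₀ n) = ρ n := by
  have h : ∃ r ≤ N.L i₀, N.S i₀ n = N.S i₀ r := ⟨n, hn, rfl⟩
  rw [componentWeight, if_neg (hN.S_ne_Y hn), dif_pos h,
    hN.S_injOn h.choose_spec.1 hn h.choose_spec.2.symm]

theorem componentWeight_U {n : ℕ} (hn1 : 1 ≤ n) (hn : n ≤ N.L i₀) :
    N.componentWeight i₀ η A ρ τ (N.U i₀ n) = τ n := by
  have h : ∃ r, 1 ≤ r ∧ r ≤ N.L i₀ ∧ N.U i₀ n = N.U i₀ r := ⟨n, hn1, hn, rfl⟩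
  rw [componentWeight, if_neg (hN.U_ne_Y hn1 hn),
    dif_neg fun ⟨r, hr, hS⟩ => hN.S_ne_U i₀ hr hn1 hn hS.symm, dif_pos h,
    hN.U_injOn h.choose_spec.1 h.choose_spec.2.1 hn1 hn h.choose_spec.2.2.symm]

end Separated

namespace AdmissibleWeights

variable (hw : N.AdmissibleWeights i₀ η A ρ τ)
include hw

theorem le_componentWeight (x : σ) : A ≤ N.componentWeight i₀ η A ρ τ x := by
  unfold componentWeight
  split_ifs with h₁ h₂ h₃
  · exact hw.le_Y
  · exact hw.le_S _ h₂.choose_spec.1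
  · exact hw.le_U _ h₃.choose_spec.1 h₃.choose_spec.2.1
  · exact le_rfl

variable (hN : N.Separated i₀)
include hN

theorem componentWeight_le_of_ne_U {x : σ} (hx : ∀ r, 1 ≤ r → r ≤ N.L i₀ → x ≠ N.U i₀ r) :
    N.componentWeight i₀ η A ρ τ x ≤ 20 := by
  by_cases hxc : N.InComponent i₀ x
  · rcases hxc with rfl | ⟨r, hr, rfl⟩ | ⟨r, hr1, hr, rfl⟩
    · rw [componentWeight_Y]; exact hw.Y_le
    · rw [hN.componentWeight_S hr]; exact hw.S_le r hr
    · exact absurd rfl (hx r hr1 hr)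
  · rw [componentWeight_of_not_inComponent hxc]; linarith [hw.le_Y, hw.Y_le]

theorem weight_bindingComplex_le {i : N.ι} {j : ℕ} (hj : j < N.L i) {z : σ}
    (hz : z = N.U i (j + 1) ∨ z = N.Y i ∨ z = N.S i j) :
    weight (N.componentWeight i₀ η A ρ τ) (N.bindingComplex i j) ≤
      N.componentWeight i₀ η A ρ τ z + 20 := by
  rw [bindingComplex, map_add, weight_single, weight_single, one_smul, one_smul]
  by_cases hi : i = i₀
  · subst hi
    rcases hz with rfl | rfl | rfl <;>
      simp only [componentWeight_Y, hN.componentWeight_S hj.le,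
        hN.componentWeight_U (Nat.le_add_left 1 j) hj]
    · exact hw.bind j hj
    · linarith [hw.S_le j hj.le]
    · linarith [hw.Y_le]
  · -- At most one reactant lies in the component, and it is not an intermediate.
    have hY := hw.componentWeight_le_of_ne_U hN fun r hr1 hr => hN.Y_ne_U i hr1 hr
    have hS := hw.componentWeight_le_of_ne_U hN fun r hr1 hr => hN.S_ne_U i hj.le hr1 hr
    have hz := hw.le_componentWeight z
    by_cases hYc : N.InComponent i₀ (N.Y i)
    · rw [componentWeight_of_not_inComponent (hN.not_inComponent_S hi hj hYc)]
      linarith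
    · rw [componentWeight_of_not_inComponent hYc]
      linarith

theorem weight_single_U_le {i : N.ι} {j : ℕ} (hj : j < N.L i) {z : σ}
    (hz : z = N.Y i ∨ z = N.S i j ∨ z = N.S i (j + 1) ∨ z = N.U i (j + 1)) :
    weight (N.componentWeight i₀ η A ρ τ) (single (N.U i (j + 1)) 1) ≤
      N.componentWeight i₀ η A ρ τ z + 20 := by
  rw [weight_single, one_smul]
  by_cases hi : i = i₀
  · subst hi
    rw [hN.componentWeight_U (Nat.le_add_left 1 j) hj]
    rcases hz with rfl | rfl | rfl | rfl <;>
      simp only [componentWeight_Y, hN.componentWeight_S hj.le,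
        hN.componentWeight_S (Nat.succ_le_of_lt hj), hN.componentWeight_U (Nat.le_add_left 1 j) hj]
    · exact hw.unbind_Y j hj
    · exact hw.unbind_S j hj
    · exact hw.unbind_S_succ j hj
    · omega
  · rw [componentWeight_of_not_inComponent fun h => hi (hN.eq_of_inComponent_U hj h)]
    linarith [hw.le_componentWeight z]

end AdmissibleWeights

variable [DecidableEq σ]

namespace Assumption1

variable (h1 : N.Assumption1)
include h1

theorem Y_ne_U (i i₀ : N.ι) {r : ℕ} (hr1 : 1 ≤ r) (hr : r ≤ N.L i₀) : N.Y i ≠ N.U i₀ r := by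
  obtain ⟨j, rfl⟩ := exists_fin_eq_add_one hr1 hr
  exact (h1.U_ne_Y i₀ j i).symm

theorem S_ne_U (i i₀ : N.ι) {j r : ℕ} (hj : j ≤ N.L i) (hr1 : 1 ≤ r) (hr : r ≤ N.L i₀) :
    N.S i j ≠ N.U i₀ r := by
  obtain ⟨j', rfl⟩ := exists_fin_eq_add_one hr1 hr
  exact (h1.U_ne_S i₀ j' i j hj).symm

theorem U_injOn (i₀ : N.ι) {r r' : ℕ} (hr1 : 1 ≤ r) (hr : r ≤ N.L i₀) (hr1' : 1 ≤ r')
    (hr' : r' ≤ N.L i₀) (h : N.U i₀ r = N.U i₀ r') : r = r' := by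
  obtain ⟨j, rfl⟩ := exists_fin_eq_add_one hr1 hr
  obtain ⟨j', rfl⟩ := exists_fin_eq_add_one hr1' hr'
  have := (h1.U_inj i₀ j i₀ j' h).2
  omega

theorem eq_of_inComponent_U {i₀ i : N.ι} {j : ℕ} (hj : j < N.L i)
    (hU : N.InComponent i₀ (N.U i (j + 1))) : i = i₀ := by
  obtain ⟨j', rfl⟩ : ∃ j' : Fin (N.L i), j = j' := ⟨⟨j, hj⟩, rfl⟩
  rcases hU with hU | ⟨r, hr, hU⟩ | ⟨r, hr1, hr, hU⟩
  · exact absurd hU (h1.U_ne_Y i j' i₀)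
  · exact absurd hU (h1.U_ne_S i j' i₀ r hr)
  · obtain ⟨j'', rfl⟩ := exists_fin_eq_add_one hr1 hr
    exact (h1.U_inj i j' i₀ j'' hU).1

theorem not_inComponent_S {part : σ → ℕ} (hp : N.IsPartition part) {i₀ i : N.ι} {j : ℕ}
    (hi : i ≠ i₀) (hj : j < N.L i) (hY : N.InComponent i₀ (N.Y i)) :
    ¬ N.InComponent i₀ (N.S i j) := by
  intro hS
  obtain ⟨α, -, hSα, -, -⟩ := hp.2 i₀
  obtain ⟨β, -, hSβ, hYβ, -⟩ := hp.2 i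
  have hSi : part (N.S i j) = β := hSβ j hj.le
  have hne (r : ℕ) (hr : r ≤ N.L i₀) : ¬ (∀ x : σ,
      ind (N.Y i) x + ind (N.S i j) x = ind (N.Y i₀) x + ind (N.S i₀ r) x) :=
    fun h => hi (h1.complex_unique i i₀ j r hj.le hr h)
  rcases hY with hY | ⟨r, hr, hY⟩ | ⟨r, hr1, hr, hY⟩
  · rcases hS with hS | ⟨r', hr', hS⟩ | ⟨r', hr1', hr', hS⟩
    · exact hYβ (hY ▸ hS ▸ hSi)
    · exact hne r' hr' fun x => by rw [hY, hS]
    · exact h1.S_ne_U i i₀ hj.le hr1' hr' hS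
  · rcases hS with hS | ⟨r', hr', hS⟩ | ⟨r', hr1', hr', hS⟩
    · exact hne r hr fun x => by rw [hY, hS, add_comm]
    · exact hYβ (by rw [hY, hSα r hr, ← hSα r' hr', ← hS, hSi])
    · exact h1.S_ne_U i i₀ hj.le hr1' hr' hS
  · exact h1.Y_ne_U i i₀ hr1 hr hY

theorem separated {part : σ → ℕ} (hp : N.IsPartition part) (i₀ : N.ι) : N.Separated i₀ where
  Y_ne_S hr h := by
    obtain ⟨α, -, hSα, hYα, -⟩ := hp.2 i₀
    exact hYα (h ▸ hSα _ hr)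
  Y_ne_U i := h1.Y_ne_U i i₀
  S_ne_U i := h1.S_ne_U i i₀
  S_injOn := h1.S_inj i₀ _ _
  U_injOn := h1.U_injOn i₀
  not_inComponent_S := h1.not_inComponent_S hp
  eq_of_inComponent_U := h1.eq_of_inComponent_U

end Assumption1

end Component

variable [Fintype σ] [DecidableEq σ]

section Dynamics

variable {N : A1Network σ} {i₀ : N.ι}

theorem deriv_zero (k : N.Param → ℝ) (x : σ) : N.deriv k 0 x = X x := rfl

theorem deriv_succ (k : N.Param → ℝ) (ℓ : ℕ) (x : σ) :
    N.deriv k (ℓ + 1) x = lieD (N.rhs k) (N.deriv k ℓ x) := rfl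

variable (N) in
theorem lieD_rhs (k : N.Param → ℝ) (φ : MvPolynomial σ ℝ) :
    lieD (N.rhs k) φ = ∑ i, ∑ j : Fin (N.L i),
      (monomial (N.bindingComplex i j) (k ⟨i, j, 0⟩) *
          (pderiv (N.U i (j + 1)) φ - pderiv (N.Y i) φ - pderiv (N.S i j) φ)
        + monomial (single (N.U i (j + 1)) 1) (k ⟨i, j, 1⟩) *
          (pderiv (N.Y i) φ + pderiv (N.S i j) φ - pderiv (N.U i (j + 1)) φ)
        + monomial (single (N.U i (j + 1)) 1) (k ⟨i, j, 2⟩) *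
          (pderiv (N.Y i) φ + pderiv (N.S i (j + 1)) φ - pderiv (N.U i (j + 1)) φ)) := by
  have hmul (c : ℝ) (M : MvPolynomial σ ℝ) (g : σ → ℝ) :
      ∑ x, pderiv x φ * (C (c * g x) * M) = C c * M * ∑ x, C (g x) * pderiv x φ := by
    rw [Finset.mul_sum]
    exact Finset.sum_congr rfl fun x _ => by rw [C_mul]; ring
  have hind (z : σ) : ∑ x, C (ind z x) * pderiv x φ = pderiv z φ := by simp [ind]
  simp only [lieD, rhs, Finset.mul_sum, mul_add]
  rw [Finset.sum_comm]
  refine Finset.sum_congr rfl fun i _ => ?_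
  rw [Finset.sum_comm]
  refine Finset.sum_congr rfl fun j _ => ?_
  simp only [Finset.sum_add_distrib, hmul]
  simp only [map_sub, map_add, sub_mul, add_mul, Finset.sum_sub_distrib, Finset.sum_add_distrib,
    hind, bindingComplex, X, monomial_mul, C_mul_monomial, mul_one]

theorem Separated.coeff_lieD_rhs (hN : N.Separated i₀) (k : N.Param → ℝ) (φ : MvPolynomial σ ℝ)
    {e : σ →₀ ℕ} (he : ∀ x, e x ≠ 0 → N.InComponent i₀ x) :
    coeff e (lieD (N.rhs k) φ) = ∑ n ∈ Finset.range (N.L i₀),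
      ((if N.bindingComplex i₀ n ≤ e then N.rate i₀ k 0 n * coeff (e - N.bindingComplex i₀ n)
          (pderiv (N.U i₀ (n + 1)) φ - pderiv (N.Y i₀) φ - pderiv (N.S i₀ n) φ) else 0)
        + (if single (N.U i₀ (n + 1)) 1 ≤ e then
            N.rate i₀ k 1 n * coeff (e - single (N.U i₀ (n + 1)) 1)
              (pderiv (N.Y i₀) φ + pderiv (N.S i₀ n) φ - pderiv (N.U i₀ (n + 1)) φ) else 0)
        + (if single (N.U i₀ (n + 1)) 1 ≤ e then
            N.rate i₀ k 2 n * coeff (e - single (N.U i₀ (n + 1)) 1)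
              (pderiv (N.Y i₀) φ + pderiv (N.S i₀ (n + 1)) φ - pderiv (N.U i₀ (n + 1)) φ)
          else 0)) := by
  rw [lieD_rhs, coeff_sum, Finset.sum_eq_single i₀]
  · rw [coeff_sum, ← Fin.sum_univ_eq_sum_range]
    refine Finset.sum_congr rfl fun j _ => ?_
    simp only [coeff_add, coeff_monomial_mul', rate, dif_pos j.isLt]
  · intro i _ hi
    rw [coeff_sum]
    refine Finset.sum_eq_zero fun j _ => ?_
    have hYS : ¬ N.bindingComplex i j ≤ e := fun h => hN.not_inComponent_S hi j.isLt
      (he _ (by have := h (N.Y i); simp [bindingComplex] at this; omega))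
      (he _ (by have := h (N.S i j); simp [bindingComplex] at this; omega))
    have hUe : ¬ single (N.U i (j + 1)) 1 ≤ e := fun h =>
      hi (hN.eq_of_inComponent_U j.isLt (he _ (by have := single_le_iff.mp h; omega)))
    simp only [coeff_add, coeff_monomial_mul', if_neg hYS, if_neg hUe, add_zero]
  · exact fun h => absurd (Finset.mem_univ i₀) h

variable {η A : ℤ} {ρ τ : ℕ → ℤ}

omit [Fintype σ] in
theorem AdmissibleWeights.coeff_rhs_eq_zero (hw : N.AdmissibleWeights i₀ η A ρ τ)
    (hN : N.Separated i₀) (k : N.Param → ℝ) {x : σ} {d : σ →₀ ℕ}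
    (hd : N.componentWeight i₀ η A ρ τ x + 20 < weight (N.componentWeight i₀ η A ρ τ) d) :
    coeff d (N.rhs k x) = 0 := by
  rw [rhs, coeff_sum]
  refine Finset.sum_eq_zero fun i _ => ?_
  rw [coeff_sum]
  refine Finset.sum_eq_zero fun j _ => ?_
  have hind {a : σ} (h : ¬ x = a) : ind a x = 0 := if_neg (Ne.symm h)
  have hA (h : N.bindingComplex i j = d) :
      ind (N.U i (j + 1)) x - ind (N.Y i) x - ind (N.S i j) x = 0 := by
    by_cases hx : x = N.U i (j + 1) ∨ x = N.Y i ∨ x = N.S i j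
    · have := hw.weight_bindingComplex_le hN j.isLt hx
      rw [h] at this
      linarith
    · simp only [not_or] at hx
      rw [hind hx.1, hind hx.2.1, hind hx.2.2]; ring
  have hB (h : single (N.U i (j + 1)) 1 = d) :
      ind (N.Y i) x + ind (N.S i j) x - ind (N.U i (j + 1)) x = 0 ∧
      ind (N.Y i) x + ind (N.S i (j + 1)) x - ind (N.U i (j + 1)) x = 0 := by
    by_cases hx : x = N.Y i ∨ x = N.S i j ∨ x = N.S i (j + 1) ∨ x = N.U i (j + 1)
    · have := hw.weight_single_U_le hN j.isLt hx
      rw [h] at this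
      linarith
    · simp only [not_or] at hx
      rw [hind hx.1, hind hx.2.1, hind hx.2.2.1, hind hx.2.2.2]; constructor <;> ring
  rw [show X (N.Y i) * X (N.S i j) = monomial (N.bindingComplex i j) (1 : ℝ) by
    rw [bindingComplex, X, X, monomial_mul, one_mul]]
  simp only [coeff_add, coeff_C_mul, X, coeff_monomial]
  split_ifs with h₁ h₂ h₂
  · rw [hA h₁, (hB h₂).1, (hB h₂).2]; ring
  · rw [hA h₁]; ring
  · rw [(hB h₂).1, (hB h₂).2]; ring
  · ring

theorem AdmissibleWeights.coeff_deriv_eq_zero (hw : N.AdmissibleWeights i₀ η A ρ τ)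
    (hN : N.Separated i₀) (k : N.Param → ℝ) (ℓ : ℕ) {d : σ →₀ ℕ}
    (hd : ρ (N.L i₀) + 20 * ℓ < weight (N.componentWeight i₀ η A ρ τ) d) :
    coeff d (N.deriv k ℓ (N.S i₀ (N.L i₀))) = 0 := by
  refine coeff_lieDIter_eq_zero_of_weight (fun x d => hw.coeff_rhs_eq_zero hN k) (fun d hd => ?_) ℓ
    (by rw [mul_comm]; exact hd)
  rw [X, coeff_monomial, if_neg]
  rintro rfl
  rw [weight_single, one_smul, hN.componentWeight_S le_rfl] at hd
  exact hd.false

theorem AdmissibleWeights.coeff_pderiv_deriv_eq_zero (hw : N.AdmissibleWeights i₀ η A ρ τ)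
    (hN : N.Separated i₀) (k : N.Param → ℝ) (ℓ : ℕ) {d : σ →₀ ℕ} {z : σ}
    (hd : ρ (N.L i₀) + 20 * ℓ <
      weight (N.componentWeight i₀ η A ρ τ) d + N.componentWeight i₀ η A ρ τ z) :
    coeff d (pderiv z (N.deriv k ℓ (N.S i₀ (N.L i₀)))) = 0 :=
  coeff_pderiv_eq_zero_of_weight (fun _ => hw.coeff_deriv_eq_zero hN k ℓ) hd

namespace Separated

variable (hN : N.Separated i₀) (k : N.Param → ℝ)
include hN

theorem coeff_monoU_lieD {m : ℕ} (hm : m < N.L i₀) {φ : MvPolynomial σ ℝ}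
    (hY : coeff (single (N.Y i₀) (m + 1)) φ = 0)
    (hS : coeff (single (N.Y i₀) m + single (N.S i₀ (N.L i₀ - 1 - m)) 1) φ = 0) :
    coeff (N.monoU i₀ m) (lieD (N.rhs k) φ) =
      N.rate i₀ k 2 (N.L i₀ - 1 - m) * coeff (N.monoS i₀ m) φ -
        (N.rate i₀ k 1 (N.L i₀ - 1 - m) + N.rate i₀ k 2 (N.L i₀ - 1 - m)) *
          coeff (N.monoU i₀ m) φ := by
  have hn1 : N.L i₀ - 1 - m + 1 = N.L i₀ - m := by omega
  have hA (n : ℕ) (hn : n < N.L i₀) : ¬ N.bindingComplex i₀ n ≤ N.monoU i₀ m :=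
    not_bindingComplex_le_of_S
      (by simp (disch := omega) [monoU, single_apply, hN.Y_ne_S, hN.U_ne_S])
  rw [hN.coeff_lieD_rhs k _ (e := N.monoU i₀ m)
      (inComponent_of_pair inComponent_Y (inComponent_U (by omega) (by omega))),
    Finset.sum_eq_single (N.L i₀ - 1 - m)]
  · have hB : single (N.U i₀ (N.L i₀ - 1 - m + 1)) 1 ≤ N.monoU i₀ m := by
      rw [monoU, hn1]; exact le_add_self
    rw [if_neg (hA _ (by omega)), if_pos hB, if_pos hB, monoU, hn1, add_tsub_cancel_right,
      zero_add]
    simp only [coeff_add, coeff_sub, coeff_pderiv]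
    rw [← single_add, hY, hS, ← monoU, ← monoS]
    simp (disch := omega) [single_apply, hN.Y_ne_S, hN.Y_ne_U]
    ring
  · intro n hn hne
    rw [Finset.mem_range] at hn
    have hB : ¬ single (N.U i₀ (n + 1)) 1 ≤ N.monoU i₀ m := not_single_one_le_of_apply_eq_zero (by
      simp (disch := omega) [monoU, single_apply, hN.Y_ne_U, hN.U_inj_iff]; omega)
    rw [if_neg (hA n hn), if_neg hB, if_neg hB, add_zero, add_zero]
  · exact fun h => absurd (Finset.mem_range.mpr (by omega)) h

theorem coeff_monoS_succ_lieD {m : ℕ} (hm : m < N.L i₀) {φ : MvPolynomial σ ℝ}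
    (hY : coeff (single (N.Y i₀) (m + 1)) φ = 0)
    (hS : coeff (single (N.Y i₀) m + single (N.S i₀ (N.L i₀ - 1 - m)) 1) φ = 0) :
    coeff (N.monoS i₀ (m + 1)) (lieD (N.rhs k) φ) =
      N.rate i₀ k 0 (N.L i₀ - 1 - m) * coeff (N.monoU i₀ m) φ := by
  have hn1 : N.L i₀ - 1 - m + 1 = N.L i₀ - m := by omega
  have hsplit : N.monoS i₀ (m + 1) = single (N.Y i₀) m + N.bindingComplex i₀ (N.L i₀ - 1 - m) := by
    rw [monoS, bindingComplex, single_add, add_assoc,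
      show N.L i₀ - (m + 1) = N.L i₀ - 1 - m by omega]
  have hB (n : ℕ) (hn : n < N.L i₀) : ¬ single (N.U i₀ (n + 1)) 1 ≤ N.monoS i₀ (m + 1) :=
    not_single_one_le_of_apply_eq_zero (by
      simp (disch := omega) [monoS, single_apply, hN.Y_ne_U, hN.S_ne_U])
  rw [hN.coeff_lieD_rhs k _ (e := N.monoS i₀ (m + 1))
      (inComponent_of_pair inComponent_Y (inComponent_S (by omega))),
    Finset.sum_eq_single (N.L i₀ - 1 - m)]
  · rw [if_pos (hsplit ▸ le_add_self), if_neg (hB _ (by omega)), if_neg (hB _ (by omega)), hsplit,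
      add_tsub_cancel_right]
    simp only [coeff_sub, coeff_pderiv]
    rw [← single_add, hY, hS, hn1, ← monoU]
    simp (disch := omega) [single_apply, hN.Y_ne_U]
  · intro n hn hne
    rw [Finset.mem_range] at hn
    have hA : ¬ N.bindingComplex i₀ n ≤ N.monoS i₀ (m + 1) := not_bindingComplex_le_of_S (by
      simp (disch := omega) [monoS, single_apply, hN.Y_ne_S, hN.S_inj_iff]; omega)
    rw [if_neg hA, if_neg (hB n hn), if_neg (hB n hn), add_zero, add_zero]
  · exact fun h => absurd (Finset.mem_range.mpr (by omega)) h

theorem chain_vanish_Y {m ℓ : ℕ} (hm : m < N.L i₀) (hℓ : ℓ ≤ 2 * m + 1) :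
    coeff (single (N.Y i₀) (m + 1)) (N.deriv k ℓ (N.S i₀ (N.L i₀))) = 0 :=
  (N.admissibleWeights_chain i₀).coeff_deriv_eq_zero hN k ℓ (by
    simp (disch := omega) [weight_single, componentWeight_Y]; omega)

theorem chain_vanish_S {m ℓ : ℕ} (hm : m < N.L i₀) (hℓ : ℓ ≤ 2 * m + 1) :
    coeff (single (N.Y i₀) m + single (N.S i₀ (N.L i₀ - 1 - m)) 1)
      (N.deriv k ℓ (N.S i₀ (N.L i₀))) = 0 :=
  (N.admissibleWeights_chain i₀).coeff_deriv_eq_zero hN k ℓ (by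
    simp (disch := omega) [weight_single, hN.componentWeight_S, componentWeight_Y]; omega)

theorem chain_vanish_U {m : ℕ} (hm : m < N.L i₀) :
    coeff (N.monoU i₀ m) (N.deriv k (2 * m) (N.S i₀ (N.L i₀))) = 0 :=
  (N.admissibleWeights_chain i₀).coeff_deriv_eq_zero hN k _ (by
    simp (disch := omega) [monoU, weight_single, componentWeight_Y, hN.componentWeight_U]
    omega)

theorem chain_odd {m : ℕ} (hm : m < N.L i₀) :
    coeff (N.monoU i₀ m) (N.deriv k (2 * m + 1) (N.S i₀ (N.L i₀))) =
      N.rate i₀ k 2 (N.L i₀ - 1 - m) *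
        coeff (N.monoS i₀ m) (N.deriv k (2 * m) (N.S i₀ (N.L i₀))) := by
  rw [deriv_succ, hN.coeff_monoU_lieD k hm (hN.chain_vanish_Y k hm (by omega))
    (hN.chain_vanish_S k hm (by omega)), hN.chain_vanish_U k hm, mul_zero, sub_zero]

theorem chain_even {m : ℕ} (hm : m < N.L i₀) :
    coeff (N.monoS i₀ (m + 1)) (N.deriv k (2 * (m + 1)) (N.S i₀ (N.L i₀))) =
      N.rate i₀ k 0 (N.L i₀ - 1 - m) *
        coeff (N.monoU i₀ m) (N.deriv k (2 * m + 1) (N.S i₀ (N.L i₀))) := by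
  rw [show 2 * (m + 1) = 2 * m + 1 + 1 by ring, deriv_succ,
    hN.coeff_monoS_succ_lieD k hm (hN.chain_vanish_Y k hm le_rfl) (hN.chain_vanish_S k hm le_rfl)]

theorem chain_stay {m : ℕ} (hm : m < N.L i₀) :
    coeff (N.monoU i₀ m) (N.deriv k (2 * m + 2) (N.S i₀ (N.L i₀))) =
      N.rate i₀ k 2 (N.L i₀ - 1 - m) *
          coeff (N.monoS i₀ m) (N.deriv k (2 * m + 1) (N.S i₀ (N.L i₀))) -
        (N.rate i₀ k 1 (N.L i₀ - 1 - m) + N.rate i₀ k 2 (N.L i₀ - 1 - m)) *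
          coeff (N.monoU i₀ m) (N.deriv k (2 * m + 1) (N.S i₀ (N.L i₀))) :=
  hN.coeff_monoU_lieD k hm (hN.chain_vanish_Y k hm le_rfl) (hN.chain_vanish_S k hm le_rfl)

theorem coeff_monoS_deriv {m : ℕ} (hm : m ≤ N.L i₀) :
    coeff (N.monoS i₀ m) (N.deriv k (2 * m) (N.S i₀ (N.L i₀))) = N.chainProd i₀ k m := by
  induction m with
  | zero => simp [monoS, deriv_zero, chainProd, coeff_X]
  | succ m ih =>
    rw [hN.chain_even k (by omega), hN.chain_odd k (by omega), ih (by omega)]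
    simp only [chainProd, Finset.prod_range_succ]
    ring

theorem coeff_monoU_deriv {m : ℕ} (hm : m < N.L i₀) :
    coeff (N.monoU i₀ m) (N.deriv k (2 * m + 1) (N.S i₀ (N.L i₀))) =
      N.chainProd i₀ k m * N.rate i₀ k 2 (N.L i₀ - 1 - m) := by
  rw [hN.chain_odd k hm, hN.coeff_monoS_deriv k hm.le, mul_comm]

theorem coeff_S_zero_S_deriv_one :
    coeff (single (N.S i₀ 0) 1 + single (N.S i₀ (N.L i₀)) 1)
      (N.deriv k 1 (N.S i₀ (N.L i₀))) = 0 := by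
  rw [deriv_succ, hN.coeff_lieD_rhs k _ (inComponent_of_pair (inComponent_S (by omega))
    (inComponent_S le_rfl))]
  refine Finset.sum_eq_zero fun n hn => ?_
  rw [Finset.mem_range] at hn
  have hB : ¬ single (N.U i₀ (n + 1)) 1 ≤ single (N.S i₀ 0) 1 + single (N.S i₀ (N.L i₀)) 1 :=
    not_single_one_le_of_apply_eq_zero (by simp (disch := omega) [single_apply, hN.S_ne_U])
  rw [if_neg (not_bindingComplex_le_of_Y (by simp (disch := omega) [single_apply, hN.S_ne_Y])),
    if_neg hB, if_neg hB, add_zero, add_zero]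

theorem coeff_S_zero_U_deriv_two (hL : 2 ≤ N.L i₀) :
    coeff (single (N.S i₀ 0) 1 + single (N.U i₀ (N.L i₀)) 1)
      (N.deriv k 2 (N.S i₀ (N.L i₀))) = 0 := by
  have hw := N.admissibleWeights_bind_first i₀
  have hn : N.L i₀ - 1 + 1 = N.L i₀ := by omega
  set e : σ →₀ ℕ := single (N.S i₀ 0) 1 + single (N.U i₀ (N.L i₀)) 1 with he
  have hA (n : ℕ) : ¬ N.bindingComplex i₀ n ≤ e :=
    not_bindingComplex_le_of_Y (by simp (disch := omega) [he, single_apply, hN.S_ne_Y, hN.U_ne_Y])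
  rw [deriv_succ, hN.coeff_lieD_rhs k _
      (inComponent_of_pair (inComponent_S (by omega)) (inComponent_U (by omega) le_rfl)),
    Finset.sum_eq_single (N.L i₀ - 1)]
  · have hB : single (N.U i₀ (N.L i₀ - 1 + 1)) 1 ≤ e := by rw [hn]; exact le_add_self
    rw [if_neg (hA _), if_pos hB, if_pos hB, hn, add_tsub_cancel_right]
    simp only [coeff_add, coeff_sub]
    rw [hw.coeff_pderiv_deriv_eq_zero hN k _ (z := N.Y i₀) (by
        simp (disch := omega) [weight_single, componentWeight_Y, hN.componentWeight_S]; omega),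
      hw.coeff_pderiv_deriv_eq_zero hN k _ (z := N.S i₀ (N.L i₀ - 1)) (by
        simp (disch := omega) [weight_single, hN.componentWeight_S]; omega),
      hw.coeff_pderiv_deriv_eq_zero hN k _ (z := N.U i₀ (N.L i₀)) (by
        simp (disch := omega) [weight_single, hN.componentWeight_S, hN.componentWeight_U]; omega),
      coeff_pderiv, hN.coeff_S_zero_S_deriv_one k]
    ring
  · intro n hn hne
    rw [Finset.mem_range] at hn
    have hB : ¬ single (N.U i₀ (n + 1)) 1 ≤ e := not_single_one_le_of_apply_eq_zero (by
      simp (disch := omega) [he, single_apply, hN.S_ne_U, hN.U_inj_iff]; omega)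
    rw [if_neg (hA _), if_neg hB, if_neg hB, add_zero, add_zero]
  · exact fun h => absurd (Finset.mem_range.mpr (by omega)) h

theorem coeff_monoS_one_S_zero_lieD (hL : 2 ≤ N.L i₀) {φ : MvPolynomial σ ℝ}
    (hU : coeff (single (N.S i₀ 0) 1 + single (N.U i₀ (N.L i₀)) 1) φ = 0)
    (hY : coeff (single (N.S i₀ 0) 1 + single (N.Y i₀) 1) φ = 0)
    (hS : coeff (single (N.S i₀ 0) 1 + single (N.S i₀ (N.L i₀ - 1)) 1) φ = 0)
    (hU₁ : coeff (single (N.S i₀ (N.L i₀ - 1)) 1 + single (N.U i₀ 1) 1) φ = 0) :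
    coeff (N.monoS i₀ 1 + single (N.S i₀ 0) 1) (lieD (N.rhs k) φ) =
      -(N.rate i₀ k 0 0 * coeff (N.monoS i₀ 1) φ) := by
  have hsupp : ∀ x, (N.monoS i₀ 1 + single (N.S i₀ 0) 1 : σ →₀ ℕ) x ≠ 0 →
      N.InComponent i₀ x :=
    inComponent_of_triple inComponent_Y (inComponent_S (by omega)) (inComponent_S (by omega))
  have hB (n : ℕ) (hn : n < N.L i₀) :
      ¬ single (N.U i₀ (n + 1)) 1 ≤ N.monoS i₀ 1 + single (N.S i₀ 0) 1 :=
    not_single_one_le_of_apply_eq_zero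
      (by simp (disch := omega) [monoS, single_apply, hN.Y_ne_U, hN.S_ne_U])
  have hlast : N.monoS i₀ 1 + single (N.S i₀ 0) 1 =
      N.bindingComplex i₀ (N.L i₀ - 1) + single (N.S i₀ 0) 1 := rfl
  have hfirst : N.monoS i₀ 1 + single (N.S i₀ 0) 1 =
      single (N.S i₀ (N.L i₀ - 1)) 1 + N.bindingComplex i₀ 0 := by
    rw [monoS, bindingComplex]; abel
  rw [hN.coeff_lieD_rhs k _ hsupp,
    Finset.sum_eq_add_of_mem (N.L i₀ - 1) 0 (by simp; omega) (by simp; omega) (by omega)]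
  · rw [if_neg (hB _ (by omega)), if_neg (hB _ (by omega)), if_neg (hB _ (by omega)),
      if_neg (hB _ (by omega)), if_pos (hlast ▸ le_self_add), if_pos (hfirst ▸ le_add_self),
      hlast, add_tsub_cancel_left, ← hlast, hfirst, add_tsub_cancel_right]
    simp only [coeff_sub, coeff_pderiv, zero_add, show N.L i₀ - 1 + 1 = N.L i₀ by omega]
    rw [hU, hY, hS, hU₁, add_comm (single (N.S i₀ (N.L i₀ - 1)) 1) (single (N.S i₀ 0) 1), hS,
      add_comm (single (N.S i₀ (N.L i₀ - 1)) 1) (single (N.Y i₀) 1), ← monoS]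
    simp (disch := omega) [single_apply, hN.S_ne_Y]
  · rintro n hn ⟨hne, hne0⟩
    rw [Finset.mem_range] at hn
    have hA : ¬ N.bindingComplex i₀ n ≤ N.monoS i₀ 1 + single (N.S i₀ 0) 1 :=
      not_bindingComplex_le_of_S (by
        simp (disch := omega) [monoS, single_apply, hN.Y_ne_S, hN.S_inj_iff]; omega)
    rw [if_neg hA, if_neg (hB n hn), if_neg (hB n hn), add_zero, add_zero]

theorem coeff_monoS_one_S_zero_deriv_three (hL : 2 ≤ N.L i₀) :
    coeff (N.monoS i₀ 1 + single (N.S i₀ 0) 1) (N.deriv k 3 (N.S i₀ (N.L i₀))) =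
      -(N.rate i₀ k 0 0 * coeff (N.monoS i₀ 1) (N.deriv k 2 (N.S i₀ (N.L i₀)))) := by
  have hw := N.admissibleWeights_bind_first i₀
  rw [deriv_succ, hN.coeff_monoS_one_S_zero_lieD k hL (hN.coeff_S_zero_U_deriv_two k hL)]
  · exact hw.coeff_deriv_eq_zero hN k 2 (by
      simp (disch := omega) [weight_single, componentWeight_Y, hN.componentWeight_S]; omega)
  · exact hw.coeff_deriv_eq_zero hN k 2 (by
      simp (disch := omega) [weight_single, hN.componentWeight_S]; omega)
  · exact hw.coeff_deriv_eq_zero hN k 2 (by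
      simp (disch := omega) [weight_single, hN.componentWeight_S, hN.componentWeight_U]; omega)

theorem coeff_S_U_one_deriv_three (hL : 2 ≤ N.L i₀) :
    coeff (single (N.S i₀ (N.L i₀ - 1)) 1 + single (N.U i₀ 1) 1)
      (N.deriv k 3 (N.S i₀ (N.L i₀))) =
      (N.rate i₀ k 1 0 + N.rate i₀ k 2 0) *
        coeff (N.monoS i₀ 1) (N.deriv k 2 (N.S i₀ (N.L i₀))) := by
  have hw := N.admissibleWeights_unbind_first i₀
  set e : σ →₀ ℕ := single (N.S i₀ (N.L i₀ - 1)) 1 + single (N.U i₀ 1) 1 with he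
  have hA (n : ℕ) : ¬ N.bindingComplex i₀ n ≤ e :=
    not_bindingComplex_le_of_Y (by simp (disch := omega) [he, single_apply, hN.S_ne_Y, hN.U_ne_Y])
  rw [deriv_succ, hN.coeff_lieD_rhs k _
      (inComponent_of_pair (inComponent_S (by omega)) (inComponent_U le_rfl (by omega))),
    Finset.sum_eq_single 0]
  · have hB : single (N.U i₀ (0 + 1)) 1 ≤ e := le_add_self
    rw [if_neg (hA _), if_pos hB, if_pos hB, zero_add, add_tsub_cancel_right]
    simp only [coeff_add, coeff_sub]
    rw [hw.coeff_pderiv_deriv_eq_zero hN k _ (z := N.S i₀ 0) (by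
        simp (disch := omega) [weight_single, hN.componentWeight_S]; omega),
      hw.coeff_pderiv_deriv_eq_zero hN k _ (z := N.S i₀ 1) (by
        simp (disch := omega) [weight_single, hN.componentWeight_S]; omega),
      hw.coeff_pderiv_deriv_eq_zero hN k _ (z := N.U i₀ 1) (by
        simp (disch := omega) [weight_single, hN.componentWeight_S, hN.componentWeight_U]; omega),
      coeff_pderiv, add_comm (single _ 1) (single (N.Y i₀) 1), ← monoS]
    simp (disch := omega) [single_apply, hN.S_ne_Y]
    ring
  · intro n hn hne
    rw [Finset.mem_range] at hn
    have hB : ¬ single (N.U i₀ (n + 1)) 1 ≤ e := not_single_one_le_of_apply_eq_zero (by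
      simp (disch := omega) [he, single_apply, hN.S_ne_U, hN.U_inj_iff]; omega)
    rw [if_neg (hA _), if_neg hB, if_neg hB, add_zero, add_zero]
  · exact fun h => absurd (Finset.mem_range.mpr (by omega)) h

end Separated

namespace Separated

variable (hN : N.Separated i₀) {k₁ k₂ : N.Param → ℝ} (hk : ∀ r, 0 < k₁ r) {D : ℕ}
  (hobs : ∀ ℓ ≤ D, N.deriv k₁ ℓ (N.S i₀ (N.L i₀)) = N.deriv k₂ ℓ (N.S i₀ (N.L i₀)))
include hN hk hobs

theorem rate_two_eq {m : ℕ} (hm : m < N.L i₀) (hD : 2 * m + 1 ≤ D) :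
    N.rate i₀ k₁ 2 (N.L i₀ - 1 - m) = N.rate i₀ k₂ 2 (N.L i₀ - 1 - m) := by
  have h := hN.chain_odd k₁ hm
  have hX := hN.coeff_monoS_deriv k₁ hm.le
  rw [hobs _ hD, hobs _ (by omega), hN.chain_odd k₂ hm] at h
  rw [hobs _ (by omega)] at hX
  exact (mul_right_cancel₀ (hX ▸ (chainProd_pos hk m).ne') h).symm

theorem rate_zero_eq {m : ℕ} (hm : m < N.L i₀) (hD : 2 * m + 2 ≤ D) :
    N.rate i₀ k₁ 0 (N.L i₀ - 1 - m) = N.rate i₀ k₂ 0 (N.L i₀ - 1 - m) := by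
  have h := hN.chain_even k₁ hm
  have hX := hN.coeff_monoU_deriv k₁ hm
  rw [hobs _ (by omega), hobs _ (by omega), hN.chain_even k₂ hm] at h
  rw [hobs _ (by omega)] at hX
  exact (mul_right_cancel₀ (hX ▸ (mul_pos (chainProd_pos hk m) (rate_pos hk _ _)).ne') h).symm

theorem rate_one_eq {m : ℕ} (hm : m < N.L i₀) (hD : 2 * m + 2 ≤ D) :
    N.rate i₀ k₁ 1 (N.L i₀ - 1 - m) = N.rate i₀ k₂ 1 (N.L i₀ - 1 - m) := by
  have h := hN.chain_stay k₁ hm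
  have hX := hN.coeff_monoU_deriv k₁ hm
  rw [hobs _ hD, hobs (2 * m + 1) (by omega), hN.chain_stay k₂ hm,
    hN.rate_two_eq hk hobs hm (by omega)] at h
  rw [hobs _ (by omega)] at hX
  refine mul_right_cancel₀ (hX ▸ (mul_pos (chainProd_pos hk m) (rate_pos hk _ _)).ne') ?_
  linarith

theorem coeff_monoS_one_deriv_two_ne_zero (hL : 1 ≤ N.L i₀) (hD : 2 ≤ D) :
    coeff (N.monoS i₀ 1) (N.deriv k₂ 2 (N.S i₀ (N.L i₀))) ≠ 0 := by
  rw [← hobs 2 hD, show 2 = 2 * 1 from rfl, hN.coeff_monoS_deriv k₁ hL]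
  exact (chainProd_pos hk 1).ne'

theorem rate_zero_zero_eq (hL : 2 ≤ N.L i₀) (hD : 3 ≤ D) : N.rate i₀ k₁ 0 0 = N.rate i₀ k₂ 0 0 := by
  have h := hN.coeff_monoS_one_S_zero_deriv_three k₁ hL
  rw [hobs 3 hD, hobs 2 (by omega), hN.coeff_monoS_one_S_zero_deriv_three k₂ hL, neg_inj] at h
  exact (mul_right_cancel₀
    (hN.coeff_monoS_one_deriv_two_ne_zero hk hobs (by omega) (by omega)) h).symm

theorem rate_one_zero_eq (hL : 2 ≤ N.L i₀) (hD : 2 * N.L i₀ - 1 ≤ D) :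
    N.rate i₀ k₁ 1 0 = N.rate i₀ k₂ 1 0 := by
  have h := hN.coeff_S_U_one_deriv_three k₁ hL
  have hc := hN.rate_two_eq hk hobs (m := N.L i₀ - 1) (by omega) (by omega)
  rw [show N.L i₀ - 1 - (N.L i₀ - 1) = 0 by omega] at hc
  rw [hobs 3 (by omega), hobs 2 (by omega), hN.coeff_S_U_one_deriv_three k₂ hL, hc] at h
  have := mul_right_cancel₀ (hN.coeff_monoS_one_deriv_two_ne_zero hk hobs (by omega) (by omega)) h
  linarith

theorem rate_eq (hD : max 2 (2 * N.L i₀ - 1) ≤ D) {n : ℕ} (hn : n < N.L i₀) (t : Fin 3) :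
    N.rate i₀ k₁ t n = N.rate i₀ k₂ t n := by
  obtain ⟨m, hm, rfl⟩ : ∃ m < N.L i₀, n = N.L i₀ - 1 - m := ⟨N.L i₀ - 1 - n, by omega, by omega⟩
  have hfirst : ¬ 2 * m + 2 ≤ D → N.L i₀ - 1 - m = 0 ∧ 2 ≤ N.L i₀ := by omega
  fin_cases t
  · by_cases h : 2 * m + 2 ≤ D
    · exact hN.rate_zero_eq hk hobs hm h
    · rw [(hfirst h).1]; exact hN.rate_zero_zero_eq hk hobs (hfirst h).2 (by omega)
  · by_cases h : 2 * m + 2 ≤ D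
    · exact hN.rate_one_eq hk hobs hm h
    · rw [(hfirst h).1]; exact hN.rate_one_zero_eq hk hobs (hfirst h).2 (by omega)
  · exact hN.rate_two_eq hk hobs hm (by omega)

end Separated

end Dynamics

/-- **Proposition (one connected component).** All the rate constants of a fixed connected
component `i₀` can be identified from the derivatives `s_L^{(ℓ)}`, `1 ≤ ℓ ≤ max 2 (2L-1)`,
of the last product `S i₀ (L i₀)` of the component. -/
theorem component_identifiable_from_last_product
    (N : A1Network σ) (h1 : N.Assumption1) (h2 : N.Assumption2) (i₀ : N.ι) :
    N.IdentifiableFrom (fun k => fun p : Fin (N.L i₀) × Fin 3 => k ⟨i₀, p.1, p.2⟩)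
      {N.S i₀ (N.L i₀)} (max 2 (2 * N.L i₀ - 1)) := by
  obtain ⟨part, hp⟩ := h2
  intro k₁ k₂ hk₁ _ hobs
  have hobs' (ℓ : ℕ) (hℓ : ℓ ≤ max 2 (2 * N.L i₀ - 1)) :
      N.deriv k₁ ℓ (N.S i₀ (N.L i₀)) = N.deriv k₂ ℓ (N.S i₀ (N.L i₀)) := by
    rcases Nat.eq_zero_or_pos ℓ with rfl | hℓ0
    · rw [deriv_zero, deriv_zero]
    · exact hobs _ rfl ℓ hℓ0 hℓ
  funext ⟨j, t⟩
  simpa [rate, j.isLt] using (h1.separated hp i₀).rate_eq hk₁ hobs' le_rfl j.isLt t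

end A1Network
end

section
/- If a chemical reaction network satisfying Assumptions 1 and 2 consists of exactly N connected components, the i-th being Y_i+S_{i,0} ⇄ U_{i,1} → Y_i+S_{i,1} ⇄ ⋯ ⇄ U_{i,L_i} → Y_i+S_{i,L_i} (with rate constants a_{i,j}, b_{i,j}, c_{i,j}), then the associated mass-action system is identifiable from the variables s_{1,L_1},…,s_{N,L_N} corresponding to the last products of the components; moreover, for every 1 ≤ i ≤ N, the order of derivation needed for the variable s_{i,L_i} is at most max{2, 2L_i−1}: the injectivity condition holds using s_{i,L_i}^{(ℓ)} for 1 ≤ ℓ ≤ max{2, 2L_i−1} for each i. -/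
/-!
Killing the variables outside component `i` and renaming those of component `i` as the species
of an abstract chain `y + s 0 ⇄ u 0 → y + s 1 ⇄ ⋯ → y + s L` is an algebra map that intertwines
the Lie derivative of the network with that of the chain, because every reaction of another
component involves a species outside component `i`.

For the chain, with `a, b, c` the rates of the last block, `s_L' = c u_{L-1}` and
`s_L'' = c a y s_{L-1} - c (b + c) u_{L-1}`, while in `s_L'''` the monomials `y s_t s_{L-1}` and
`u_t s_{L-1}` have coefficients `-c a a_t` and `c a (b_t + c_t)`. To reach the remaining `c_t`,
give `s q`, `u t`, `y` the weights `2q`, `2t+1`, `0`: every reaction term lowers the weight by at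
most one, and by exactly one only along `u t → y + s t` and `s (t+1) → u t`. Hence the part of
lowest weight of `s_L^{(2n+1)}` is the single monomial `γ y^n u_q` (`q + n + 1 = L`) with
`γ = c_q ∏_{q < t < L} a_t c_t`, which yields `c_q` from the rates of the later blocks.
-/

open MvPolynomial Finsupp

variable {σ : Type*}

theorem Derivation.sum_apply {R A M ι : Type*} [CommSemiring R] [CommSemiring A]
    [AddCommMonoid M] [Algebra R A] [Module A M] [Module R M] (s : Finset ι)
    (D : ι → Derivation R A M) (a : A) : (∑ i ∈ s, D i) a = ∑ i ∈ s, D i a := by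
  rw [← Derivation.coeFnAddMonoidHom_apply, map_sum, Finset.sum_apply]
  rfl

theorem Finsupp.single_ne_single_add_single {α : Type*} (a b c : α) :
    (single a 1 : α →₀ ℕ) ≠ single b 1 + single c 1 :=
  fun h => by simpa using congrArg degree h

namespace MvPolynomial

section WeightFiltration

variable {σ R : Type*} [CommSemiring R]

variable (R) in
noncomputable def weightAtLeast (w : σ → ℕ) (n : ℕ) : Submodule R (MvPolynomial σ R) :=
  restrictSupport R {m | n ≤ weight w m}

variable {w : σ → ℕ} {a m n : ℕ} {p q : MvPolynomial σ R}

theorem mem_weightAtLeast : p ∈ weightAtLeast R w n ↔ ∀ d ∈ p.support, n ≤ weight w d :=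
  mem_restrictSupport_iff R

theorem weightAtLeast_zero : weightAtLeast R w 0 = ⊤ := by
  simp [weightAtLeast]

theorem weightAtLeast_antitone : Antitone (weightAtLeast R w) :=
  fun _ _ h => restrictSupport_mono R fun _ hm => le_trans h hm

theorem coeff_eq_zero_of_mem_weightAtLeast (hp : p ∈ weightAtLeast R w n) {d : σ →₀ ℕ}
    (hd : weight w d < n) : coeff d p = 0 :=
  notMem_support_iff.1 fun h => hd.not_ge (mem_weightAtLeast.1 hp d h)

theorem mul_mem_weightAtLeast (hp : p ∈ weightAtLeast R w m) (hq : q ∈ weightAtLeast R w n) :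
    p * q ∈ weightAtLeast R w (m + n) := by
  classical
  refine mem_weightAtLeast.2 fun d hd => ?_
  obtain ⟨a, ha, b, hb, rfl⟩ := Finset.mem_add.1 (support_mul p q hd)
  rw [map_add]
  exact add_le_add (mem_weightAtLeast.1 hp a ha) (mem_weightAtLeast.1 hq b hb)

theorem C_mem_weightAtLeast (c : R) : C c ∈ weightAtLeast R w 0 := by
  rw [weightAtLeast_zero]
  exact Submodule.mem_top

theorem X_mem_weightAtLeast (i : σ) : (X i : MvPolynomial σ R) ∈ weightAtLeast R w (w i) := by
  classical
  refine mem_weightAtLeast.2 fun d hd => ?_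
  rw [mem_support_iff, coeff_X] at hd
  rw [← (ite_ne_right_iff.1 hd).1, weight_single, one_smul]

theorem pderiv_mem_weightAtLeast (i : σ) (hp : p ∈ weightAtLeast R w n) :
    pderiv i p ∈ weightAtLeast R w (n - w i) := by
  refine mem_weightAtLeast.2 fun d hd => ?_
  rw [mem_support_iff, coeff_pderiv] at hd
  have := mem_weightAtLeast.1 hp _ (mem_support_iff.2 (left_ne_zero_of_mul hd))
  simp only [map_add, weight_single, one_smul] at this
  omega

theorem mul_pderiv_mem_weightAtLeast (i : σ) (hp : p ∈ weightAtLeast R w a)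
    (hq : q ∈ weightAtLeast R w n) (h : m ≤ a + (n - w i)) :
    p * pderiv i q ∈ weightAtLeast R w m :=
  weightAtLeast_antitone h (mul_mem_weightAtLeast hp (pderiv_mem_weightAtLeast i hq))

end WeightFiltration

theorem map_derivation_of_map_X {σ R A : Type*} [CommSemiring R] [CommSemiring A]
    [Algebra R A] (κ : MvPolynomial σ R →ₐ[R] A)
    (Δ : Derivation R (MvPolynomial σ R) (MvPolynomial σ R)) (D : Derivation R A A)
    (h : ∀ x, κ (Δ (X x)) = D (κ (X x))) (p : MvPolynomial σ R) : κ (Δ p) = D (κ p) := by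
  induction p using MvPolynomial.induction_on with
  | C a => simp [derivation_C]
  | add p q hp hq => simp only [map_add, hp, hq]
  | mul_X p x hp => simp only [Derivation.leibniz, map_add, map_mul, smul_eq_mul, hp, h]

section KillComplOn

variable {σ τ R : Type*} [CommSemiring R] [DecidableEq σ]

noncomputable def killComplOn (s : Finset τ) (e : τ → σ) :
    MvPolynomial σ R →ₐ[R] MvPolynomial τ R :=
  aeval fun x => ∑ a ∈ s, if e a = x then X a else 0

variable {s : Finset τ} {e : τ → σ}

theorem killComplOn_X_of_mem (he : Set.InjOn e s) {a : τ} (ha : a ∈ s) :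
    killComplOn (R := R) s e (X (e a)) = X a := by
  rw [killComplOn, aeval_X, Finset.sum_eq_single_of_mem a ha fun b hb hba => if_neg
    fun h => hba (he hb ha h), if_pos rfl]

theorem killComplOn_X_of_forall_ne {x : σ} (hx : ∀ a ∈ s, e a ≠ x) :
    killComplOn (R := R) s e (X x) = 0 := by
  rw [killComplOn, aeval_X]
  exact Finset.sum_eq_zero fun a ha => if_neg (hx a ha)

end KillComplOn

end MvPolynomial

theorem ind_apply_of_injOn {τ : Type*} [DecidableEq σ] [DecidableEq τ] {e : τ → σ}
    {s : Set τ} (he : Set.InjOn e s) {a b : τ} (ha : a ∈ s) (hb : b ∈ s) :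
    ind (e a) (e b) = ind a b := by
  simp only [ind, he.eq_iff ha hb]

section LieDerivative

variable [Fintype σ]

theorem lieD_eq_sum_smul_pderiv (f : σ → MvPolynomial σ ℝ) (φ : MvPolynomial σ ℝ) :
    lieD f φ = (∑ x, f x • pderiv x) φ := by
  simp [lieD, Derivation.sum_apply, mul_comm]

theorem lieD_X (f : σ → MvPolynomial σ ℝ) (x : σ) : lieD f (X x) = f x := by
  classical
  simp [lieD, pderiv_X, Pi.single_apply]

theorem map_lieDIter_of_map_X {A : Type*} [CommSemiring A] [Algebra ℝ A]
    (κ : MvPolynomial σ ℝ →ₐ[ℝ] A) (D : Derivation ℝ A A) {f : σ → MvPolynomial σ ℝ}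
    (hf : ∀ x, κ (f x) = D (κ (X x))) (ℓ : ℕ) (φ : MvPolynomial σ ℝ) :
    κ (lieDIter f ℓ φ) = D^[ℓ] (κ φ) := by
  have hlieD (ψ : MvPolynomial σ ℝ) : κ (lieD f ψ) = D (κ ψ) := by
    rw [lieD_eq_sum_smul_pderiv]
    exact map_derivation_of_map_X κ _ D
      (fun x => by rw [← lieD_eq_sum_smul_pderiv, lieD_X, hf]) ψ
  induction ℓ with
  | zero => rfl
  | succ ℓ ih => rw [lieDIter, hlieD, ih, Function.iterate_succ_apply']

end LieDerivative

/-- The species of the chain `y + s 0 ⇄ u 0 → y + s 1 ⇄ u 1 → ⋯ ⇄ u (L-1) → y + s L`: block `t`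
is `y + s t ⇄ u t → y + s (t+1)`, counted from `0` (the intermediate of block `t` is `U (t+1)`
in `A1Network`). -/
inductive ChainSpecies
  | enzyme
  | substrate (q : ℕ)
  | intermediate (t : ℕ)
  deriving DecidableEq

structure ChainRates where
  a : ℕ → ℝ
  b : ℕ → ℝ
  c : ℕ → ℝ

local notation "𝓟" => MvPolynomial ChainSpecies ℝ

namespace EnzymeChain

open ChainSpecies Finset

def species (L : ℕ) : Finset ChainSpecies :=
  insert enzyme ((range (L + 1)).image substrate ∪ (range L).image intermediate)

theorem mem_species {L : ℕ} {a : ChainSpecies} :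
    a ∈ species L ↔ a = enzyme ∨ (∃ q ≤ L, a = substrate q) ∨ ∃ t < L, a = intermediate t := by
  cases a <;> simp [species, eq_comm]

theorem enzyme_mem_species (L : ℕ) : enzyme ∈ species L := by
  simp [species]

theorem substrate_mem_species {L q : ℕ} (hq : q ≤ L) : substrate q ∈ species L := by
  simp [mem_species, hq]

theorem intermediate_mem_species {L t : ℕ} (ht : t < L) : intermediate t ∈ species L := by
  simp [mem_species, ht]

def position : ChainSpecies → ℕ
  | enzyme => 0
  | substrate q => 2 * q
  | intermediate t => 2 * t + 1

section Derivations

variable (L : ℕ) (r : ChainRates)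

/-- The reaction terms that lower `position` by exactly one. -/
noncomputable def leadDeriv : Derivation ℝ 𝓟 𝓟 :=
  ∑ t ∈ range L, ((C (r.a t) * X enzyme * X (substrate t)) • pderiv (intermediate t)
    + (C (r.c t) * X (intermediate t)) • pderiv (substrate (t + 1)))

noncomputable def restDeriv : Derivation ℝ 𝓟 𝓟 :=
  ∑ t ∈ range L,
    ((C (r.a t) * X enzyme * X (substrate t)) • -(pderiv enzyme + pderiv (substrate t))
    + (C (r.b t) * X (intermediate t)) •
        (pderiv enzyme + pderiv (substrate t) - pderiv (intermediate t))
    + (C (r.c t) * X (intermediate t)) • (pderiv enzyme - pderiv (intermediate t)))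

noncomputable def massAction : Derivation ℝ 𝓟 𝓟 := leadDeriv L r + restDeriv L r

theorem massAction_X (x : ChainSpecies) :
    massAction L r (X x) = ∑ t ∈ range L,
      (C (r.a t * (ind (intermediate t) x - ind enzyme x - ind (substrate t) x)) *
          (X enzyme * X (substrate t))
        + C (r.b t * (ind enzyme x + ind (substrate t) x - ind (intermediate t) x)) *
          X (intermediate t)
        + C (r.c t * (ind enzyme x + ind (substrate (t + 1)) x - ind (intermediate t) x)) *
          X (intermediate t)) := by
  simp only [massAction, leadDeriv, restDeriv, Derivation.add_apply, Derivation.sum_apply,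
    ← sum_add_distrib]
  refine sum_congr rfl fun t _ => ?_
  simp only [Derivation.add_apply, Derivation.sub_apply, Derivation.neg_apply,
    Derivation.smul_apply, smul_eq_mul, pderiv_X, Pi.single_apply, ind, eq_comm (a := x)]
  split_ifs <;> simp <;> ring

end Derivations

section Filtration

theorem complex_mem_weightAtLeast (t : ℕ) (κ : ℝ) :
    C κ * X enzyme * X (substrate t) ∈ weightAtLeast ℝ position (2 * t) := by
  simpa [position] using mul_mem_weightAtLeast (mul_mem_weightAtLeast
    (C_mem_weightAtLeast (w := position) κ) (X_mem_weightAtLeast enzyme))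
    (X_mem_weightAtLeast (w := position) (R := ℝ) (substrate t))

theorem intermediate_mem_weightAtLeast (t : ℕ) (κ : ℝ) :
    C κ * X (intermediate t) ∈ weightAtLeast ℝ position (2 * t + 1) := by
  simpa [position] using mul_mem_weightAtLeast (C_mem_weightAtLeast (w := position) κ)
    (X_mem_weightAtLeast (w := position) (R := ℝ) (intermediate t))

variable {L : ℕ} {r : ChainRates} {n : ℕ} {φ : 𝓟}

theorem leadDeriv_mem_weightAtLeast (hφ : φ ∈ weightAtLeast ℝ position n) :
    leadDeriv L r φ ∈ weightAtLeast ℝ position (n - 1) := by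
  rw [leadDeriv, Derivation.sum_apply]
  refine Submodule.sum_mem _ fun t _ => ?_
  simp only [Derivation.add_apply, Derivation.smul_apply, smul_eq_mul]
  refine add_mem (mul_pderiv_mem_weightAtLeast _ (complex_mem_weightAtLeast t _) hφ ?_)
    (mul_pderiv_mem_weightAtLeast _ (intermediate_mem_weightAtLeast t _) hφ ?_) <;>
  simp only [position] <;> omega

theorem restDeriv_mem_weightAtLeast (hφ : φ ∈ weightAtLeast ℝ position n) :
    restDeriv L r φ ∈ weightAtLeast ℝ position n := by
  rw [restDeriv, Derivation.sum_apply]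
  refine Submodule.sum_mem _ fun t _ => ?_
  simp only [Derivation.add_apply, Derivation.sub_apply, Derivation.neg_apply,
    Derivation.smul_apply, smul_eq_mul, mul_add, mul_sub, mul_neg]
  have hY (i : ChainSpecies) (hi : position i ≤ 2 * t) :
      C (r.a t) * X enzyme * X (substrate t) * pderiv i φ ∈ weightAtLeast ℝ position n :=
    mul_pderiv_mem_weightAtLeast i (complex_mem_weightAtLeast t _) hφ (by omega)
  have hU (κ : ℝ) (i : ChainSpecies) (hi : position i ≤ 2 * t + 1) :
      C κ * X (intermediate t) * pderiv i φ ∈ weightAtLeast ℝ position n :=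
    mul_pderiv_mem_weightAtLeast i (intermediate_mem_weightAtLeast t _) hφ (by omega)
  have h0 : position enzyme = 0 := rfl
  have hs : position (substrate t) = 2 * t := rfl
  have hu : position (intermediate t) = 2 * t + 1 := rfl
  exact add_mem (add_mem (neg_mem (add_mem (hY _ (by omega)) (hY _ (by omega))))
    (sub_mem (add_mem (hU _ _ (by omega)) (hU _ _ (by omega))) (hU _ _ (by omega))))
    (sub_mem (hU _ _ (by omega)) (hU _ _ (by omega)))

theorem massAction_mem_weightAtLeast (hφ : φ ∈ weightAtLeast ℝ position n) :
    massAction L r φ ∈ weightAtLeast ℝ position (n - 1) :=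
  add_mem (leadDeriv_mem_weightAtLeast hφ)
    (weightAtLeast_antitone (Nat.sub_le n 1) (restDeriv_mem_weightAtLeast hφ))

end Filtration

section LeadingTerm

variable {L : ℕ} {r : ChainRates}

theorem leadDeriv_X_enzyme : leadDeriv L r (X enzyme) = 0 := by
  simp [leadDeriv, Derivation.sum_apply, pderiv_X]

theorem leadDeriv_X_substrate_succ {q : ℕ} (hq : q < L) :
    leadDeriv L r (X (substrate (q + 1))) = C (r.c q) * X (intermediate q) := by
  simp [leadDeriv, Derivation.sum_apply, pderiv_X, Pi.single_apply, hq]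

theorem leadDeriv_X_intermediate {q : ℕ} (hq : q < L) :
    leadDeriv L r (X (intermediate q)) = C (r.a q) * X enzyme * X (substrate q) := by
  simp [leadDeriv, Derivation.sum_apply, pderiv_X, Pi.single_apply, hq]

theorem leadDeriv_C_mul_X_enzyme_pow_mul (κ : ℝ) (n : ℕ) (φ : 𝓟) :
    leadDeriv L r (C κ * X enzyme ^ n * φ) = C κ * X enzyme ^ n * leadDeriv L r φ := by
  simp [Derivation.leibniz, Derivation.leibniz_pow, leadDeriv_X_enzyme, derivation_C]

variable (r) in
def chainCoeff : ℕ → ℕ → ℝ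
  | q, 0 => r.c q
  | q, n + 1 => r.c q * r.a (q + 1) * chainCoeff (q + 1) n

theorem leadDeriv_iterate_X_substrate {q n : ℕ} (h : q + n + 1 ≤ L) :
    (leadDeriv L r)^[2 * n + 1] (X (substrate (q + n + 1))) =
      C (chainCoeff r q n) * X enzyme ^ n * X (intermediate q) := by
  induction n generalizing q with
  | zero => simp [chainCoeff, leadDeriv_X_substrate_succ (show q < L by omega)]
  | succ n ih =>
    rw [show 2 * (n + 1) + 1 = 1 + 1 + (2 * n + 1) by ring, Function.iterate_add_apply,
      show q + (n + 1) + 1 = q + 1 + n + 1 by ring, ih (by omega)]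
    simp only [Function.iterate_succ_apply', Function.iterate_zero_apply]
    calc leadDeriv L r (leadDeriv L r
          (C (chainCoeff r (q + 1) n) * X enzyme ^ n * X (intermediate (q + 1))))
        = leadDeriv L r (C (chainCoeff r (q + 1) n * r.a (q + 1)) * X enzyme ^ (n + 1) *
            X (substrate (q + 1))) := by
          rw [leadDeriv_C_mul_X_enzyme_pow_mul, leadDeriv_X_intermediate (by omega)]
          congr 1
          rw [map_mul]
          ring
      _ = C (chainCoeff r q (n + 1)) * X enzyme ^ (n + 1) * X (intermediate q) := by
          rw [leadDeriv_C_mul_X_enzyme_pow_mul, leadDeriv_X_substrate_succ (by omega), chainCoeff,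
            map_mul, map_mul, map_mul]
          ring

theorem leadDeriv_iterate_mem_weightAtLeast (ℓ : ℕ) :
    (leadDeriv L r)^[ℓ] (X (substrate L)) ∈ weightAtLeast ℝ position (2 * L - ℓ) := by
  induction ℓ with
  | zero => exact X_mem_weightAtLeast (substrate L)
  | succ ℓ ih =>
    rw [Function.iterate_succ_apply']
    exact weightAtLeast_antitone (by omega) (leadDeriv_mem_weightAtLeast ih)

theorem massAction_iterate_sub_leadDeriv_iterate_mem (ℓ : ℕ) :
    (massAction L r)^[ℓ] (X (substrate L)) - (leadDeriv L r)^[ℓ] (X (substrate L)) ∈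
      weightAtLeast ℝ position (2 * L + 1 - ℓ) := by
  induction ℓ with
  | zero => simp
  | succ ℓ ih =>
    rw [Function.iterate_succ_apply', Function.iterate_succ_apply',
      show ∀ φ ψ : 𝓟, massAction L r φ - leadDeriv L r ψ =
        massAction L r (φ - ψ) + restDeriv L r ψ by
          intro φ ψ
          simp only [massAction, Derivation.add_apply, map_sub]
          ring]
    exact add_mem (weightAtLeast_antitone (by omega) (massAction_mem_weightAtLeast ih))
      (weightAtLeast_antitone (by omega)
        (restDeriv_mem_weightAtLeast (leadDeriv_iterate_mem_weightAtLeast ℓ)))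

theorem coeff_massAction_iterate_odd {q n : ℕ} (h : q + n + 1 = L) :
    coeff (Finsupp.single enzyme n + Finsupp.single (intermediate q) 1)
      ((massAction L r)^[2 * n + 1] (X (substrate L))) = chainCoeff r q n := by
  rw [← sub_add_cancel ((massAction L r)^[2 * n + 1] (X (substrate L)))
    ((leadDeriv L r)^[2 * n + 1] (X (substrate L))), coeff_add,
    coeff_eq_zero_of_mem_weightAtLeast (massAction_iterate_sub_leadDeriv_iterate_mem _)
      (by simp [Finsupp.weight_single, position]; omega), zero_add, ← h,
    leadDeriv_iterate_X_substrate le_rfl, X_pow_eq_monomial, X, C_mul_monomial, monomial_mul,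
    coeff_monomial, if_pos rfl]
  ring

theorem chainCoeff_ne_zero (ha : ∀ t < L, r.a t ≠ 0) (hc : ∀ t < L, r.c t ≠ 0) {q n : ℕ}
    (h : q + n + 1 ≤ L) : chainCoeff r q n ≠ 0 := by
  induction n generalizing q with
  | zero => exact hc q (by omega)
  | succ n ih =>
    exact mul_ne_zero (mul_ne_zero (hc q (by omega)) (ha (q + 1) (by omega))) (ih (by omega))

end LeadingTerm

section LowOrders

/-- Each complex `y + s t`, `u t` carries one unit of enzyme and one unit of substrate. -/
def enzymeUnits : ChainSpecies → ℕ
  | enzyme => 1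
  | substrate _ => 0
  | intermediate _ => 1

def substrateUnits : ChainSpecies → ℕ
  | enzyme => 0
  | substrate _ => 1
  | intermediate _ => 1

variable {L n t : ℕ} {r : ChainRates}

theorem isWeightedHomogeneous_massAction_X {w : ChainSpecies → ℕ} {d : ℕ}
    (hs : ∀ t, w enzyme + w (substrate t) = d) (hu : ∀ t, w (intermediate t) = d)
    (x : ChainSpecies) : IsWeightedHomogeneous w (massAction L r (X x)) d := by
  rw [massAction_X, ← mem_weightedHomogeneousSubmodule]
  refine Submodule.sum_mem _ fun t _ => ?_
  have hY : IsWeightedHomogeneous w (X enzyme * X (substrate t) : 𝓟) d :=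
    hs t ▸ (isWeightedHomogeneous_X ℝ w _).mul (isWeightedHomogeneous_X ℝ w _)
  have hU : IsWeightedHomogeneous w (X (intermediate t) : 𝓟) d :=
    hu t ▸ isWeightedHomogeneous_X ℝ w _
  exact add_mem (add_mem (zero_add d ▸ (isWeightedHomogeneous_C w _).mul hY)
    (zero_add d ▸ (isWeightedHomogeneous_C w _).mul hU))
    (zero_add d ▸ (isWeightedHomogeneous_C w _).mul hU)

theorem massAction_X_substrate_last :
    massAction (n + 1) r (X (substrate (n + 1))) = r.c n • X (intermediate n) := by
  rw [massAction_X, sum_range_succ, sum_eq_zero fun t ht => ?_, smul_eq_C_mul]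
  · simp [ind]
  · have : t < n := mem_range.1 ht
    simp [ind, show t ≠ n by omega, show t ≠ n + 1 by omega]

theorem massAction_X_intermediate (ht : t < L) :
    massAction L r (X (intermediate t)) =
      r.a t • (X enzyme * X (substrate t)) - (r.b t + r.c t) • X (intermediate t) := by
  rw [massAction_X, sum_eq_single_of_mem t (mem_range.2 ht) fun t' _ ht' => by simp [ind, ht'],
    smul_eq_C_mul, smul_eq_C_mul]
  simp [ind]
  ring

theorem coeff_massAction_X_enzyme_substrate (ht : t < L) :
    coeff (Finsupp.single enzyme 1 + Finsupp.single (substrate t) 1)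
      (massAction L r (X enzyme)) = -r.a t := by
  rw [massAction_X, coeff_sum, sum_eq_single_of_mem t (mem_range.2 ht)]
  · simp [ind, coeff_X_mul', coeff_X, Finsupp.single_ne_single_add_single]
  · intro t' _ ht'
    simp [ind, coeff_X_mul', coeff_X, Finsupp.single_ne_single_add_single,
      Finsupp.single_eq_single_iff, ht']

theorem coeff_massAction_X_enzyme_intermediate (ht : t < L) :
    coeff (Finsupp.single (intermediate t) 1) (massAction L r (X enzyme)) = r.b t + r.c t := by
  rw [massAction_X, coeff_sum, sum_eq_single_of_mem t (mem_range.2 ht)]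
  · simp [ind, coeff_X_mul', coeff_X]
  · intro t' _ ht'
    simp [ind, coeff_X_mul', coeff_X, Finsupp.single_eq_single_iff, ht']

theorem massAction_iterate_two_X_substrate_last :
    (massAction (n + 1) r)^[2] (X (substrate (n + 1))) =
      r.c n • (r.a n • (X enzyme * X (substrate n)) - (r.b n + r.c n) • X (intermediate n)) := by
  rw [Function.iterate_succ_apply', Function.iterate_one, massAction_X_substrate_last,
    Derivation.map_smul, massAction_X_intermediate (Nat.lt_succ_self n)]

theorem massAction_iterate_three_X_substrate_last :
    (massAction (n + 1) r)^[3] (X (substrate (n + 1))) =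
      r.c n • (r.a n • (X enzyme * massAction (n + 1) r (X (substrate n)) +
        massAction (n + 1) r (X enzyme) * X (substrate n)) -
        (r.b n + r.c n) • massAction (n + 1) r (X (intermediate n))) := by
  rw [Function.iterate_succ_apply', massAction_iterate_two_X_substrate_last]
  simp only [Derivation.map_smul, map_sub, Derivation.leibniz, smul_eq_mul,
    mul_comm (X (substrate n))]

theorem coeff_massAction_X_substrate_last :
    coeff (Finsupp.single (intermediate n) 1) (massAction (n + 1) r (X (substrate (n + 1)))) =
      r.c n := by
  simp [massAction_X_substrate_last]

theorem coeff_massAction_iterate_two_enzyme_substrate :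
    coeff (Finsupp.single enzyme 1 + Finsupp.single (substrate n) 1)
      ((massAction (n + 1) r)^[2] (X (substrate (n + 1)))) = r.c n * r.a n := by
  simp [massAction_iterate_two_X_substrate_last, coeff_X_mul', coeff_X,
    Finsupp.single_ne_single_add_single]

theorem coeff_massAction_iterate_two_intermediate :
    coeff (Finsupp.single (intermediate n) 1)
      ((massAction (n + 1) r)^[2] (X (substrate (n + 1)))) = -(r.c n * (r.b n + r.c n)) := by
  simp [massAction_iterate_two_X_substrate_last, coeff_X_mul']
  ring

theorem coeff_massAction_iterate_three_enzyme_substrate (ht : t < n + 1) :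
    coeff (Finsupp.single enzyme 1 + Finsupp.single (substrate t) 1 +
        Finsupp.single (substrate n) 1) ((massAction (n + 1) r)^[3] (X (substrate (n + 1)))) =
      -(r.c n * r.a n * r.a t) := by
  have hE := (isWeightedHomogeneous_massAction_X (L := n + 1) (r := r) (w := enzymeUnits)
    (fun _ => rfl) (fun _ => rfl) (substrate n)).coeff_eq_zero
    (Finsupp.single (substrate t) 1 + Finsupp.single (substrate n) 1)
    (by simp [Finsupp.weight_single, enzymeUnits])
  have hS := (isWeightedHomogeneous_massAction_X (L := n + 1) (r := r) (w := substrateUnits)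
    (fun _ => rfl) (fun _ => rfl) (intermediate n)).coeff_eq_zero
    (Finsupp.single enzyme 1 + Finsupp.single (substrate t) 1 + Finsupp.single (substrate n) 1)
    (by simp [Finsupp.weight_single, substrateUnits])
  simp only [massAction_iterate_three_X_substrate_last, coeff_smul, coeff_sub, coeff_add, hS,
    smul_eq_mul]
  rw [add_assoc, coeff_X_mul, hE, ← add_assoc, coeff_mul_X,
    coeff_massAction_X_enzyme_substrate ht]
  ring

theorem coeff_massAction_iterate_three_intermediate_substrate (ht : t < n + 1) :
    coeff (Finsupp.single (intermediate t) 1 + Finsupp.single (substrate n) 1)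
      ((massAction (n + 1) r)^[3] (X (substrate (n + 1)))) =
      r.c n * r.a n * (r.b t + r.c t) := by
  have hS := (isWeightedHomogeneous_massAction_X (L := n + 1) (r := r) (w := substrateUnits)
    (fun _ => rfl) (fun _ => rfl) (intermediate n)).coeff_eq_zero
    (Finsupp.single (intermediate t) 1 + Finsupp.single (substrate n) 1)
    (by simp [Finsupp.weight_single, substrateUnits])
  simp only [massAction_iterate_three_X_substrate_last, coeff_smul, coeff_sub, coeff_add, hS,
    smul_eq_mul]
  rw [coeff_X_mul', if_neg (by simp), coeff_mul_X, coeff_massAction_X_enzyme_intermediate ht]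
  ring

end LowOrders

section Identification

variable {L n : ℕ} {r r' : ChainRates}

theorem c_eq_of_chainCoeff_eq (ha : ∀ t < L, r'.a t ≠ 0) (hc : ∀ t < L, r'.c t ≠ 0)
    (ha_eq : ∀ t < L, r.a t = r'.a t)
    (hchain : ∀ q m, q + m + 1 = L → chainCoeff r q m = chainCoeff r' q m) :
    ∀ q < L, r.c q = r'.c q := by
  intro q hq
  obtain ⟨m, hm⟩ : ∃ m, q + m + 1 = L := ⟨L - q - 1, by omega⟩
  cases m with
  | zero => simpa [chainCoeff] using hchain q 0 hm
  | succ m =>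
    have e := hchain q (m + 1) hm
    rw [chainCoeff, chainCoeff, hchain (q + 1) m (by omega), ha_eq (q + 1) (by omega)] at e
    exact mul_right_cancel₀ (mul_ne_zero (ha (q + 1) (by omega))
      (chainCoeff_ne_zero (q := q + 1) (n := m) ha hc (by omega))) (by linear_combination e)

theorem last_rates_eq_of_iterate_eq (hc : r'.c n ≠ 0)
    (h₁ : massAction (n + 1) r (X (substrate (n + 1))) =
      massAction (n + 1) r' (X (substrate (n + 1))))
    (h₂ : (massAction (n + 1) r)^[2] (X (substrate (n + 1))) =
      (massAction (n + 1) r')^[2] (X (substrate (n + 1)))) :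
    r.a n = r'.a n ∧ r.b n = r'.b n ∧ r.c n = r'.c n := by
  have hc_eq : r.c n = r'.c n := by
    simpa [coeff_massAction_X_substrate_last] using
      congrArg (coeff (Finsupp.single (intermediate n) 1)) h₁
  have ea := congrArg (coeff (Finsupp.single enzyme 1 + Finsupp.single (substrate n) 1)) h₂
  have eb := congrArg (coeff (Finsupp.single (intermediate n) 1)) h₂
  rw [coeff_massAction_iterate_two_enzyme_substrate,
    coeff_massAction_iterate_two_enzyme_substrate, hc_eq] at ea
  rw [coeff_massAction_iterate_two_intermediate, coeff_massAction_iterate_two_intermediate,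
    hc_eq, neg_inj] at eb
  exact ⟨mul_left_cancel₀ hc ea, add_right_cancel (mul_left_cancel₀ hc eb), hc_eq⟩

theorem rates_eq_of_iterate_three_eq (hca : r'.c n * r'.a n ≠ 0)
    (hlast : r.a n = r'.a n ∧ r.c n = r'.c n)
    (h : (massAction (n + 1) r)^[3] (X (substrate (n + 1))) =
      (massAction (n + 1) r')^[3] (X (substrate (n + 1)))) {t : ℕ} (ht : t < n + 1) :
    r.a t = r'.a t ∧ r.b t + r.c t = r'.b t + r'.c t := by
  have ea := congrArg (coeff (Finsupp.single enzyme 1 + Finsupp.single (substrate t) 1 +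
    Finsupp.single (substrate n) 1)) h
  have ebc := congrArg
    (coeff (Finsupp.single (intermediate t) 1 + Finsupp.single (substrate n) 1)) h
  rw [coeff_massAction_iterate_three_enzyme_substrate ht,
    coeff_massAction_iterate_three_enzyme_substrate ht, hlast.1, hlast.2, neg_inj] at ea
  rw [coeff_massAction_iterate_three_intermediate_substrate ht,
    coeff_massAction_iterate_three_intermediate_substrate ht, hlast.1, hlast.2] at ebc
  exact ⟨mul_left_cancel₀ hca ea, mul_left_cancel₀ hca ebc⟩

theorem rates_eq_of_iterate_eq (hL : 1 ≤ L) (ha : ∀ t < L, r'.a t ≠ 0)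
    (hc : ∀ t < L, r'.c t ≠ 0)
    (h : ∀ ℓ, 1 ≤ ℓ → ℓ ≤ max 2 (2 * L - 1) →
      (massAction L r)^[ℓ] (X (substrate L)) = (massAction L r')^[ℓ] (X (substrate L))) :
    ∀ t < L, r.a t = r'.a t ∧ r.b t = r'.b t ∧ r.c t = r'.c t := by
  obtain ⟨n, rfl⟩ : ∃ n, L = n + 1 := ⟨L - 1, by omega⟩
  obtain ⟨ha_last, hb_last, hc_last⟩ := last_rates_eq_of_iterate_eq (hc n (by omega))
    (h 1 le_rfl (by omega)) (h 2 (by omega) (by omega))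
  have ha_bc (t : ℕ) (ht : t < n + 1) : r.a t = r'.a t ∧ r.b t + r.c t = r'.b t + r'.c t := by
    obtain rfl | ht' := (show t = n ∨ t < n by omega)
    · exact ⟨ha_last, by rw [hb_last, hc_last]⟩
    exact rates_eq_of_iterate_three_eq (mul_ne_zero (hc n (by omega)) (ha n (by omega)))
      ⟨ha_last, hc_last⟩ (h 3 (by omega) (by omega)) ht
  have hc_eq := c_eq_of_chainCoeff_eq ha hc (fun t ht => (ha_bc t ht).1) fun q m hqm => by
    have e := congrArg (coeff (Finsupp.single enzyme m + Finsupp.single (intermediate q) 1))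
      (h (2 * m + 1) (by omega) (by omega))
    rwa [coeff_massAction_iterate_odd hqm, coeff_massAction_iterate_odd hqm] at e
  intro t ht
  exact ⟨(ha_bc t ht).1, by linarith [(ha_bc t ht).2, hc_eq t ht], hc_eq t ht⟩

end Identification

end EnzymeChain

namespace A1Network

open ChainSpecies EnzymeChain

section Component

variable {N : A1Network σ}

variable (N) in
def chainSpecies (i : N.ι) : ChainSpecies → σ
  | enzyme => N.Y i
  | substrate q => N.S i q
  | intermediate t => N.U i (t + 1)

variable (N) in
noncomputable def chainRates (k : N.Param → ℝ) (i : N.ι) : ChainRates where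
  a t := if h : t < N.L i then k ⟨i, ⟨t, h⟩, 0⟩ else 0
  b t := if h : t < N.L i then k ⟨i, ⟨t, h⟩, 1⟩ else 0
  c t := if h : t < N.L i then k ⟨i, ⟨t, h⟩, 2⟩ else 0

theorem enzyme_ne_substrate {part : σ → ℕ} (hp : N.IsPartition part) (i : N.ι) {q : ℕ}
    (hq : q ≤ N.L i) : N.Y i ≠ N.S i q := by
  obtain ⟨α, -, hS, hY, -⟩ := hp.2 i
  exact fun h => hY (h ▸ hS q hq)

variable [DecidableEq σ]

theorem injOn_chainSpecies (h1 : N.Assumption1) {part : σ → ℕ} (hp : N.IsPartition part)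
    (i : N.ι) : Set.InjOn (N.chainSpecies i) (species (N.L i)) := by
  intro a ha b hb hab
  rw [Finset.mem_coe, mem_species] at ha hb
  rcases ha with rfl | ⟨q, hq, rfl⟩ | ⟨t, ht, rfl⟩ <;>
    rcases hb with rfl | ⟨q', hq', rfl⟩ | ⟨t', ht', rfl⟩ <;>
    simp only [chainSpecies] at hab
  · rfl
  · exact absurd hab (enzyme_ne_substrate hp i hq')
  · exact absurd hab.symm (h1.U_ne_Y i ⟨t', ht'⟩ i)
  · exact absurd hab.symm (enzyme_ne_substrate hp i hq)
  · rw [h1.S_inj i q q' hq hq' hab]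
  · exact absurd hab.symm (h1.U_ne_S i ⟨t', ht'⟩ i q hq)
  · exact absurd hab (h1.U_ne_Y i ⟨t, ht⟩ i)
  · exact absurd hab (h1.U_ne_S i ⟨t, ht⟩ i q' hq')
  · exact congrArg intermediate (h1.U_inj i ⟨t, ht⟩ i ⟨t', ht'⟩ hab).2

theorem chainSpecies_ne_intermediate_of_ne (h1 : N.Assumption1) {i i' : N.ι} (hi : i' ≠ i)
    (j : Fin (N.L i')) : ∀ a ∈ species (N.L i), N.chainSpecies i a ≠ N.U i' (j + 1) := by
  intro a ha
  rw [mem_species] at ha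
  rcases ha with rfl | ⟨q, hq, rfl⟩ | ⟨t, ht, rfl⟩
  · exact fun h => h1.U_ne_Y i' j i h.symm
  · exact fun h => h1.U_ne_S i' j i q hq h.symm
  · exact fun h => hi (h1.U_inj i ⟨t, ht⟩ i' j h).1.symm

theorem chainSpecies_ne_enzyme_or_substrate_of_ne (h1 : N.Assumption1) {part : σ → ℕ}
    (hp : N.IsPartition part) {i i' : N.ι} (hi : i' ≠ i) (j : Fin (N.L i')) :
    (∀ a ∈ species (N.L i), N.chainSpecies i a ≠ N.Y i') ∨
      ∀ a ∈ species (N.L i), N.chainSpecies i a ≠ N.S i' j := by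
  by_contra! h
  obtain ⟨⟨a, ha, hY⟩, ⟨b, hb, hS⟩⟩ := h
  rw [mem_species] at ha hb
  have hj : (j : ℕ) ≤ N.L i' := j.2.le
  obtain ⟨α, -, hSα, hYα, -⟩ := hp.2 i
  obtain ⟨α', -, hSα', hYα', -⟩ := hp.2 i'
  rcases ha with rfl | ⟨q, hq, rfl⟩ | ⟨t, ht, rfl⟩ <;>
    rcases hb with rfl | ⟨q', hq', rfl⟩ | ⟨t', ht', rfl⟩ <;>
    simp only [chainSpecies] at hY hS
  · exact hYα' (hY ▸ hS ▸ hSα' j hj)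
  · exact hi (h1.complex_unique i' i j q' hj hq' fun x => by rw [← hY, ← hS])
  · exact h1.U_ne_S i ⟨t', ht'⟩ i' j hj hS
  · exact hi (h1.complex_unique i' i j q hj hq fun x => by rw [← hY, ← hS, add_comm])
  · exact hYα' (by rw [← hY, hSα q hq, ← hSα q' hq', hS, hSα' j hj])
  · exact h1.U_ne_S i ⟨t', ht'⟩ i' j hj hS
  all_goals exact h1.U_ne_Y i ⟨t, ht⟩ i' hY

variable (N) in
noncomputable def restrictToComponent (i : N.ι) :
    MvPolynomial σ ℝ →ₐ[ℝ] MvPolynomial ChainSpecies ℝ :=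
  killComplOn (species (N.L i)) (N.chainSpecies i)

theorem restrictToComponent_X_chainSpecies (h1 : N.Assumption1) {part : σ → ℕ}
    (hp : N.IsPartition part) {i : N.ι} {a : ChainSpecies} (ha : a ∈ species (N.L i)) :
    N.restrictToComponent i (X (N.chainSpecies i a)) = X a :=
  killComplOn_X_of_mem (injOn_chainSpecies h1 hp i) ha

theorem restrictToComponent_X_intermediate_of_ne (h1 : N.Assumption1) {i i' : N.ι}
    (hi : i' ≠ i) (j : Fin (N.L i')) : N.restrictToComponent i (X (N.U i' (j + 1))) = 0 :=
  killComplOn_X_of_forall_ne (chainSpecies_ne_intermediate_of_ne h1 hi j)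

theorem restrictToComponent_X_enzyme_mul_X_substrate_of_ne (h1 : N.Assumption1)
    {part : σ → ℕ} (hp : N.IsPartition part) {i i' : N.ι} (hi : i' ≠ i) (j : Fin (N.L i')) :
    N.restrictToComponent i (X (N.Y i') * X (N.S i' j)) = 0 := by
  rw [map_mul]
  rcases chainSpecies_ne_enzyme_or_substrate_of_ne h1 hp hi j with h | h
  · rw [restrictToComponent, killComplOn_X_of_forall_ne h, zero_mul]
  · rw [restrictToComponent, killComplOn_X_of_forall_ne h, mul_zero]

theorem restrictToComponent_rhs (h1 : N.Assumption1) {part : σ → ℕ} (hp : N.IsPartition part)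
    (k : N.Param → ℝ) (i : N.ι) (x : σ) :
    N.restrictToComponent i (N.rhs k x) =
      massAction (N.L i) (N.chainRates k i) (N.restrictToComponent i (X x)) := by
  have hinj := injOn_chainSpecies h1 hp i
  have hS (j : Fin (N.L i)) := substrate_mem_species j.2.le
  have hS' (j : Fin (N.L i)) := substrate_mem_species (Nat.succ_le_of_lt j.2)
  have hU (j : Fin (N.L i)) := intermediate_mem_species j.2
  simp only [rhs, map_sum]
  rw [Finset.sum_eq_single i (fun i' _ hi' => Finset.sum_eq_zero fun j _ => by
    simp [restrictToComponent_X_enzyme_mul_X_substrate_of_ne h1 hp hi',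
      restrictToComponent_X_intermediate_of_ne h1 hi']) (by simp)]
  by_cases hx : ∃ a ∈ species (N.L i), N.chainSpecies i a = x
  · obtain ⟨a, ha, rfl⟩ := hx
    rw [restrictToComponent_X_chainSpecies h1 hp ha, massAction_X, Finset.sum_range]
    refine Finset.sum_congr rfl fun j _ => ?_
    simp only [map_add, map_mul, algHom_C, algebraMap_eq]
    rw [show N.Y i = N.chainSpecies i enzyme from rfl,
      show N.S i j = N.chainSpecies i (substrate j) from rfl,
      show N.S i (j + 1) = N.chainSpecies i (substrate (j + 1)) from rfl,
      show N.U i (j + 1) = N.chainSpecies i (intermediate j) from rfl,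
      restrictToComponent_X_chainSpecies h1 hp (enzyme_mem_species _),
      restrictToComponent_X_chainSpecies h1 hp (hS j),
      restrictToComponent_X_chainSpecies h1 hp (hU j),
      ind_apply_of_injOn hinj (enzyme_mem_species _) ha, ind_apply_of_injOn hinj (hS j) ha,
      ind_apply_of_injOn hinj (hS' j) ha, ind_apply_of_injOn hinj (hU j) ha]
    simp [chainRates, j.2]
  · push Not at hx
    rw [restrictToComponent, killComplOn_X_of_forall_ne hx, map_zero]
    refine Finset.sum_eq_zero fun j _ => ?_
    have hYx : N.Y i ≠ x := hx _ (enzyme_mem_species _)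
    have hSx : N.S i j ≠ x := hx _ (hS j)
    have hS'x : N.S i (j + 1) ≠ x := hx _ (hS' j)
    have hUx : N.U i (j + 1) ≠ x := hx _ (hU j)
    simp [ind, hYx, hSx, hS'x, hUx]

end Component

variable [Fintype σ] [DecidableEq σ]

theorem restrictToComponent_deriv_last_product {N : A1Network σ} (h1 : N.Assumption1)
    {part : σ → ℕ} (hp : N.IsPartition part) (k : N.Param → ℝ) (i : N.ι) (ℓ : ℕ) :
    N.restrictToComponent i (N.deriv k ℓ (N.S i (N.L i))) =
      (massAction (N.L i) (N.chainRates k i))^[ℓ] (X (substrate (N.L i))) := by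
  have hS := restrictToComponent_X_chainSpecies h1 hp (i := i) (a := substrate (N.L i))
    (substrate_mem_species le_rfl)
  rw [deriv, map_lieDIter_of_map_X _ _ (restrictToComponent_rhs h1 hp k i)]
  exact congrArg _ hS

/-- **Theorem.** If a chemical reaction network satisfying Assumptions 1 and 2 consists of
the connected components indexed by `ι`, then the associated mass-action system is
identifiable from the variables corresponding to the last products `S i (L i)` of the
components; moreover, for each component `i` derivatives of order at most
`max 2 (2 * L i - 1)` of its last product suffice. -/
theorem system_identifiable_from_last_products
    (N : A1Network σ) (h1 : N.Assumption1) (h2 : N.Assumption2) :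
    ∀ k₁ k₂ : N.Param → ℝ, (∀ r, 0 < k₁ r) → (∀ r, 0 < k₂ r) →
      (∀ i : N.ι, ∀ ℓ, 1 ≤ ℓ → ℓ ≤ max 2 (2 * N.L i - 1) →
        N.deriv k₁ ℓ (N.S i (N.L i)) = N.deriv k₂ ℓ (N.S i (N.L i))) →
      k₁ = k₂ := by
  intro k₁ k₂ _ hk₂ hyp
  obtain ⟨part, hp⟩ := h2
  funext ⟨i, j, m⟩
  have hk₂_ne (m : Fin 3) (t : ℕ) (ht : t < N.L i) : k₂ ⟨i, ⟨t, ht⟩, m⟩ ≠ 0 := (hk₂ _).ne'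
  obtain ⟨ha, hb, hc⟩ := rates_eq_of_iterate_eq (r := N.chainRates k₁ i)
    (r' := N.chainRates k₂ i) (N.Lpos i)
    (fun t ht => by simpa [chainRates, ht] using hk₂_ne 0 t ht)
    (fun t ht => by simpa [chainRates, ht] using hk₂_ne 2 t ht)
    (fun ℓ hℓ₁ hℓ₂ => by
      rw [← restrictToComponent_deriv_last_product h1 hp,
        ← restrictToComponent_deriv_last_product h1 hp, hyp i ℓ hℓ₁ hℓ₂]) j j.2
  simp only [chainRates, j.2, dite_true, Fin.eta] at ha hb hc
  fin_cases m <;> assumption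

end A1Network
end

section
/- For the two fixed connected components of the network, the constants ã_L, b̃_L, c̃_L, and ã_j and K̃_j = b̃_j + c̃_j for 1 ≤ j ≤ L−1, can be identified from ṡ_L and s̈_L (i.e., the map k ↦ (ã_L, b̃_L, c̃_L, (ã_j)_{j<L}, (b̃_j+c̃_j)_{j<L}) is identifiable from the variable s_L with D = 2). -/
open MvPolynomial Finsupp

variable {σ : Type*}

/-! The coefficient of `ỹ s_L` in `ṡ_L` is `-ã_L` and that of `v_L` is `b̃_L`; in `s̈_L` the
coefficient of `s_L v_j` is `-ã_L K̃_j` and that of `ỹ s_j s_L` is `ã_L ã_j`, for every `j`.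
No other reaction contributes to these monomials: by Assumptions 1 and 2 a complex `Y + S`
determines its reaction block, and a component sharing a substrate with the tilde component
has an enzyme that is none of its substrates. Since `ã_L > 0` this identifies `ã_j` and `K̃_j`,
and `c̃_L = K̃_L - b̃_L`. -/

theorem lieD_eq_mkDerivation [Fintype σ] (f : σ → MvPolynomial σ ℝ) (p : MvPolynomial σ ℝ) :
    lieD f p = mkDerivation ℝ f p := by
  classical
  have hsum (D : σ → Derivation ℝ (MvPolynomial σ ℝ) (MvPolynomial σ ℝ)) (q) :
      (∑ x, D x) q = ∑ x, D x q := by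
    simp [← Derivation.coeFnAddMonoidHom_apply, map_sum, Finset.sum_apply]
  have hD : (∑ x, f x • pderiv x : Derivation ℝ (MvPolynomial σ ℝ) (MvPolynomial σ ℝ)) =
      mkDerivation ℝ f :=
    derivation_ext fun i => by simp [hsum, pderiv_X, Pi.single_apply]
  simp [← hD, hsum, lieD, mul_comm]

theorem lieDIter_one [Fintype σ] (f : σ → MvPolynomial σ ℝ) (x : σ) :
    lieDIter f 1 (X x) = f x := by
  simp [lieDIter, lieD_eq_mkDerivation]

theorem lieDIter_two [Fintype σ] (f : σ → MvPolynomial σ ℝ) (x : σ) :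
    lieDIter f 2 (X x) = mkDerivation ℝ f (f x) := by
  simp [lieDIter, lieD_eq_mkDerivation]

theorem MvPolynomial.coeff_X_mul_of_apply_eq_zero {R : Type*} [CommSemiring R] {d : σ →₀ ℕ}
    {w : σ} (hw : d w = 0) (p : MvPolynomial σ R) : coeff d (X w * p) = 0 := by
  classical
  rw [coeff_X_mul', if_neg (by simpa using hw)]

namespace A1Network

variable {N : A1Network σ} {part : σ → ℕ}

theorem IsPartition.Y_ne_S_of_S_eq_S (hp : N.IsPartition part) {i i' : N.ι} {j j' j'' : ℕ}
    (hj : j ≤ N.L i) (hj' : j' ≤ N.L i') (hj'' : j'' ≤ N.L i') (hS : N.S i j = N.S i' j') :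
    N.Y i ≠ N.S i' j'' := by
  obtain ⟨α, -, hα, hYα, -⟩ := hp.2 i
  obtain ⟨α', -, hα', -, -⟩ := hp.2 i'
  intro hY
  apply hYα
  rw [hY, hα' j'' hj'', ← hα' j' hj', ← hS, hα j hj]

theorem IsPartition.Y_ne_S (hp : N.IsPartition part) {i : N.ι} {j : ℕ} (hj : j ≤ N.L i) :
    N.Y i ≠ N.S i j :=
  hp.Y_ne_S_of_S_eq_S hj hj hj rfl

abbrev Block (N : A1Network σ) : Type := (i : N.ι) × Fin (N.L i)

noncomputable def expYS (r : N.Block) : σ →₀ ℕ :=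
  single (N.Y r.1) 1 + single (N.S r.1 r.2) 1

noncomputable def expU (r : N.Block) : σ →₀ ℕ :=
  single (N.U r.1 (r.2 + 1)) 1

theorem degree_expYS (r : N.Block) : (expYS r).degree = 2 := by
  simp [expYS]

theorem degree_expU (r : N.Block) : (expU r).degree = 1 := by
  simp [expU]

theorem expU_ne_expYS (r r' : N.Block) : expU r ≠ expYS r' := fun h => by
  simpa [degree_expU, degree_expYS] using congrArg degree h

section

variable [DecidableEq σ]

theorem Assumption1.eq_of_Y_eq_of_S_eq (h1 : N.Assumption1) {i i' : N.ι} {j j' : ℕ}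
    (hj : j ≤ N.L i) (hj' : j' ≤ N.L i') (hY : N.Y i = N.Y i') (hS : N.S i j = N.S i' j') :
    i = i' :=
  h1.complex_unique i i' j j' hj hj' fun x => by rw [hY, hS]

theorem Assumption1.S_ne_Y_of_Y_eq_S (h1 : N.Assumption1) (hp : N.IsPartition part)
    {i i' : N.ι} {j j' : ℕ} (hj : j ≤ N.L i) (hj' : j' ≤ N.L i') (hY : N.Y i = N.S i' j') :
    N.S i j ≠ N.Y i' := by
  intro hS
  obtain rfl : i = i' :=
    h1.complex_unique i i' j j' hj hj' fun x => by rw [hY, hS, add_comm]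
  exact hp.Y_ne_S hj' hY

def coeffYS (k : N.Param → ℝ) (r : N.Block) (x : σ) : ℝ :=
  k ⟨r.1, r.2, 0⟩ * (ind (N.U r.1 (r.2 + 1)) x - ind (N.Y r.1) x - ind (N.S r.1 r.2) x)

def coeffU (k : N.Param → ℝ) (r : N.Block) (x : σ) : ℝ :=
  k ⟨r.1, r.2, 1⟩ * (ind (N.Y r.1) x + ind (N.S r.1 r.2) x - ind (N.U r.1 (r.2 + 1)) x) +
    k ⟨r.1, r.2, 2⟩ * (ind (N.Y r.1) x + ind (N.S r.1 (r.2 + 1)) x - ind (N.U r.1 (r.2 + 1)) x)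

theorem rhs_eq_sum (k : N.Param → ℝ) (x : σ) :
    N.rhs k x = ∑ r : N.Block,
      (monomial (expYS r) (coeffYS k r x) + monomial (expU r) (coeffU k r x)) := by
  rw [rhs, ← Fintype.sum_sigma']
  refine Finset.sum_congr rfl fun r _ => ?_
  rw [expYS, expU, coeffYS, coeffU, map_add, ← C_mul_X_eq_monomial, ← C_mul_X_eq_monomial,
    X, X, monomial_mul, C_mul_monomial, mul_one, mul_one, add_assoc]

theorem coeff_rhs (k : N.Param → ℝ) (d : σ →₀ ℕ) (x : σ) :
    coeff d (N.rhs k x) = ∑ r : N.Block,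
      ((if expYS r = d then coeffYS k r x else 0) + if expU r = d then coeffU k r x else 0) := by
  simp [rhs_eq_sum, coeff_sum, coeff_monomial]

theorem Assumption1.expU_injective (h1 : N.Assumption1) : Function.Injective (expU (N := N)) := by
  rintro ⟨i, j⟩ ⟨i', j'⟩ h
  obtain ⟨rfl, hj⟩ := h1.U_inj i j i' j' (single_left_injective one_ne_zero h)
  rw [Fin.ext hj]

theorem Assumption1.expYS_injective (h1 : N.Assumption1) (hp : N.IsPartition part) :
    Function.Injective (expYS (N := N)) := by
  rintro ⟨i, j⟩ ⟨i', j'⟩ h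
  rcases (single_add_single_eq_single_add_single one_ne_zero one_ne_zero).1 h with
    ⟨hY, hS⟩ | ⟨-, hY, hS⟩ | ⟨h2, -⟩
  · obtain rfl := h1.eq_of_Y_eq_of_S_eq j.2.le j'.2.le hY hS
    rw [Fin.ext (h1.S_inj i j j' j.2.le j'.2.le hS)]
  · exact absurd hS (h1.S_ne_Y_of_Y_eq_S hp j.2.le j'.2.le hY)
  · exact absurd h2 two_ne_zero

theorem coeff_rhs_expYS (h1 : N.Assumption1) (hp : N.IsPartition part) (k : N.Param → ℝ)
    (r : N.Block) (x : σ) : coeff (expYS r) (N.rhs k x) = coeffYS k r x := by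
  rw [coeff_rhs, Fintype.sum_eq_single r fun r' hr' => ?_]
  · simp [expU_ne_expYS]
  · simp [(h1.expYS_injective hp).ne hr', expU_ne_expYS]

theorem coeff_rhs_expU (h1 : N.Assumption1) (k : N.Param → ℝ) (r : N.Block) (x : σ) :
    coeff (expU r) (N.rhs k x) = coeffU k r x := by
  rw [coeff_rhs, Fintype.sum_eq_single r fun r' hr' => ?_]
  · simp [(expU_ne_expYS r r).symm]
  · simp [h1.expU_injective.ne hr', (expU_ne_expYS r r').symm]

theorem coeff_rhs_eq_zero {d : σ →₀ ℕ} (hYS : ∀ r : N.Block, expYS r ≠ d)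
    (hU : ∀ r : N.Block, expU r ≠ d) (k : N.Param → ℝ) (x : σ) : coeff d (N.rhs k x) = 0 := by
  simp [coeff_rhs, hYS, hU]

def Foreign (N : A1Network σ) (i : N.ι) (x : σ) : Prop :=
  x ≠ N.Y i ∧ (∀ j ≤ N.L i, x ≠ N.S i j) ∧ ¬ N.inter x

theorem Foreign.coeffYS_eq_zero {r : N.Block} {x : σ} (hx : N.Foreign r.1 x)
    (k : N.Param → ℝ) : coeffYS k r x = 0 := by
  obtain ⟨hY, hS, hU⟩ := hx
  have hU' : N.U r.1 (r.2 + 1) ≠ x := fun h => hU ⟨r.1, r.2, h.symm⟩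
  simp [coeffYS, ind, hU', Ne.symm hY, Ne.symm (hS r.2 r.2.isLt.le)]

theorem Foreign.coeffU_eq_zero {r : N.Block} {x : σ} (hx : N.Foreign r.1 x)
    (k : N.Param → ℝ) : coeffU k r x = 0 := by
  obtain ⟨hY, hS, hU⟩ := hx
  have hU' : N.U r.1 (r.2 + 1) ≠ x := fun h => hU ⟨r.1, r.2, h.symm⟩
  simp [coeffU, ind, hU', Ne.symm hY, Ne.symm (hS r.2 r.2.isLt.le), Ne.symm (hS (r.2 + 1) r.2.2)]

theorem Assumption1.foreign_Y_of_S_eq (h1 : N.Assumption1) (hp : N.IsPartition part)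
    {r r₀ : N.Block} (hS : N.S r.1 r.2 = N.S r₀.1 r₀.2) (hne : r ≠ r₀) :
    N.Foreign r₀.1 (N.Y r.1) :=
  ⟨fun hY => hne (h1.expYS_injective hp (by rw [expYS, expYS, hY, hS])),
    fun _ hj => hp.Y_ne_S_of_S_eq_S r.2.isLt.le r₀.2.isLt.le hj hS,
    fun ⟨i, j, h⟩ => h1.U_ne_Y i j r.1 h.symm⟩

theorem Assumption1.foreign_S_of_Y_eq (h1 : N.Assumption1) (hp : N.IsPartition part)
    {r : N.Block} {i : N.ι} {j : ℕ} (hj : j ≤ N.L i) (hY : N.Y r.1 = N.S i j) :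
    N.Foreign i (N.S r.1 r.2) :=
  ⟨h1.S_ne_Y_of_Y_eq_S hp r.2.isLt.le hj hY,
    fun _ hj' hS => hp.Y_ne_S_of_S_eq_S r.2.isLt.le hj' hj hS hY,
    fun ⟨i', j', h⟩ => h1.U_ne_S i' j' r.1 r.2 r.2.isLt.le h.symm⟩

theorem coeffYS_apply_S (h1 : N.Assumption1) (hp : N.IsPartition part) (k : N.Param → ℝ)
    (r : N.Block) : coeffYS k r (N.S r.1 r.2) = -k ⟨r.1, r.2, 0⟩ := by
  simp [coeffYS, ind, h1.U_ne_S r.1 r.2 r.1 r.2 r.2.isLt.le, hp.Y_ne_S r.2.isLt.le]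

theorem coeffU_apply_S (h1 : N.Assumption1) (hp : N.IsPartition part) (k : N.Param → ℝ)
    (r : N.Block) : coeffU k r (N.S r.1 r.2) = k ⟨r.1, r.2, 1⟩ := by
  have hP : N.S r.1 (r.2 + 1) ≠ N.S r.1 r.2 := fun h => by
    have := h1.S_inj _ _ _ r.2.2 r.2.isLt.le h
    omega
  simp [coeffU, ind, h1.U_ne_S r.1 r.2 r.1 r.2 r.2.isLt.le, hp.Y_ne_S r.2.isLt.le, hP]

theorem coeffYS_apply_Y (h1 : N.Assumption1) (hp : N.IsPartition part) (k : N.Param → ℝ)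
    (r : N.Block) : coeffYS k r (N.Y r.1) = -k ⟨r.1, r.2, 0⟩ := by
  simp [coeffYS, ind, h1.U_ne_Y, (hp.Y_ne_S r.2.isLt.le).symm]

theorem coeffU_apply_Y (h1 : N.Assumption1) (hp : N.IsPartition part) (k : N.Param → ℝ)
    (r : N.Block) : coeffU k r (N.Y r.1) = k ⟨r.1, r.2, 1⟩ + k ⟨r.1, r.2, 2⟩ := by
  simp [coeffU, ind, h1.U_ne_Y, (hp.Y_ne_S r.2.isLt.le).symm, (hp.Y_ne_S r.2.2).symm]

/-- The contribution to a coefficient of `s̈` of the complexes `Y + S` containing `s = S r₀`: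
only block `r₀` survives, the other species of any other such block being foreign to the
component of `r₀`. -/
theorem sum_coeffYS_mul_eq (h1 : N.Assumption1) (hp : N.IsPartition part) (k : N.Param → ℝ)
    (r₀ : N.Block) {F : σ → σ → ℝ} {g : σ → ℝ} (hF : ∀ x, F (N.S r₀.1 r₀.2) x = g x)
    (hF' : ∀ w, (∀ j ≤ N.L r₀.1, w ≠ N.S r₀.1 j) → ¬ N.inter w → F w (N.S r₀.1 r₀.2) = 0)
    (hg : ∀ x, N.Foreign r₀.1 x → g x = 0) :
    ∑ r : N.Block, coeffYS k r (N.S r₀.1 r₀.2) *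
        (F (N.Y r.1) (N.S r.1 r.2) + F (N.S r.1 r.2) (N.Y r.1)) =
      -k ⟨r₀.1, r₀.2, 0⟩ * g (N.Y r₀.1) := by
  rw [Fintype.sum_eq_single r₀ fun r hr => ?_]
  · rw [coeffYS_apply_S h1 hp, hF, hF' _ (fun j hj => hp.Y_ne_S hj)
      (fun ⟨i, j, h⟩ => h1.U_ne_Y i j _ h.symm), zero_add]
  by_cases hS : N.S r.1 r.2 = N.S r₀.1 r₀.2
  · have hY := h1.foreign_Y_of_S_eq hp hS hr
    rw [hS, hF, hg _ hY, hF' _ hY.2.1 hY.2.2, add_zero, mul_zero]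
  by_cases hY : N.Y r.1 = N.S r₀.1 r₀.2
  · have hS' := h1.foreign_S_of_Y_eq hp r₀.2.isLt.le hY
    rw [hY, hF, hg _ hS', hF' _ hS'.2.1 hS'.2.2, zero_add, mul_zero]
  · simp [coeffYS, ind, hS, hY, h1.U_ne_S r.1 r.2 r₀.1 r₀.2 r₀.2.isLt.le]

end

variable [Fintype σ] [DecidableEq σ]

theorem deriv_one (k : N.Param → ℝ) (x : σ) : N.deriv k 1 x = N.rhs k x :=
  lieDIter_one _ x

theorem coeff_deriv_two (k : N.Param → ℝ) (d : σ →₀ ℕ) (x : σ) :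
    coeff d (N.deriv k 2 x) = ∑ r : N.Block,
      (coeffYS k r x * (coeff d (X (N.Y r.1) * N.rhs k (N.S r.1 r.2)) +
          coeff d (X (N.S r.1 r.2) * N.rhs k (N.Y r.1))) +
        coeffU k r x * coeff d (N.rhs k (N.U r.1 (r.2 + 1)))) := by
  rw [deriv, lieDIter_two]
  conv_lhs => rw [rhs]
  simp only [map_sum, map_add, Derivation.leibniz, derivation_C, mkDerivation_X, smul_eq_mul,
    mul_zero, add_zero]
  rw [← Fintype.sum_sigma', coeff_sum]
  refine Finset.sum_congr rfl fun r _ => ?_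
  simp only [coeff_add, coeff_C_mul, coeffYS, coeffU]
  ring

theorem coeff_single_add_expU_deriv_two (h1 : N.Assumption1) (hp : N.IsPartition part)
    (k : N.Param → ℝ) (r₀ : N.Block) (m : Fin (N.L r₀.1)) :
    coeff (single (N.S r₀.1 r₀.2) 1 + expU ⟨r₀.1, m⟩) (N.deriv k 2 (N.S r₀.1 r₀.2)) =
      -k ⟨r₀.1, r₀.2, 0⟩ * (k ⟨r₀.1, m, 1⟩ + k ⟨r₀.1, m, 2⟩) := by
  have hrhs : ∀ x, coeff (single (N.S r₀.1 r₀.2) 1 + expU ⟨r₀.1, m⟩) (N.rhs k x) = 0 :=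
    coeff_rhs_eq_zero
      (fun r h => by
        rcases (single_add_single_eq_single_add_single one_ne_zero one_ne_zero).1 h with
          ⟨-, hS⟩ | ⟨-, hY, -⟩ | ⟨h2, -⟩
        · exact h1.U_ne_S r₀.1 m r.1 r.2 r.2.isLt.le hS.symm
        · exact h1.U_ne_Y r₀.1 m r.1 hY.symm
        · exact absurd h2 two_ne_zero)
      (fun r h => by simpa [degree_expU, expU] using congrArg degree h) k
  simp only [coeff_deriv_two, hrhs, mul_zero, add_zero]
  rw [sum_coeffYS_mul_eq h1 hp k r₀
    (F := fun w x => coeff (single (N.S r₀.1 r₀.2) 1 + expU ⟨r₀.1, m⟩) (X w * N.rhs k x))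
    (g := coeffU k ⟨r₀.1, m⟩) (fun x => by rw [coeff_X_mul, coeff_rhs_expU h1])
    (fun w hw hwU => coeff_X_mul_of_apply_eq_zero ?_ _)
    (fun x hx => Foreign.coeffU_eq_zero (r := ⟨r₀.1, m⟩) hx k), coeffU_apply_Y h1 hp]
  have hwU' : N.U r₀.1 (m + 1) ≠ w := fun h => hwU ⟨r₀.1, m, h.symm⟩
  simp [expU, (hw r₀.2 r₀.2.isLt.le).symm, hwU']

theorem coeff_single_add_expYS_deriv_two (h1 : N.Assumption1) (hp : N.IsPartition part)
    (k : N.Param → ℝ) (r₀ : N.Block) (m : Fin (N.L r₀.1)) :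
    coeff (single (N.S r₀.1 r₀.2) 1 + expYS ⟨r₀.1, m⟩) (N.deriv k 2 (N.S r₀.1 r₀.2)) =
      k ⟨r₀.1, r₀.2, 0⟩ * k ⟨r₀.1, m, 0⟩ := by
  have hdeg : ∀ e : σ →₀ ℕ, e.degree < 3 →
      e ≠ single (N.S r₀.1 r₀.2) 1 + expYS ⟨r₀.1, m⟩ := fun e he h => by
    simp [h, degree_expYS] at he
  have hrhs : ∀ x, coeff (single (N.S r₀.1 r₀.2) 1 + expYS ⟨r₀.1, m⟩) (N.rhs k x) = 0 :=
    coeff_rhs_eq_zero (fun r => hdeg _ (by simp [degree_expYS]))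
      (fun r => hdeg _ (by simp [degree_expU])) k
  simp only [coeff_deriv_two, hrhs, mul_zero, add_zero]
  rw [sum_coeffYS_mul_eq h1 hp k r₀
    (F := fun w x => coeff (single (N.S r₀.1 r₀.2) 1 + expYS ⟨r₀.1, m⟩) (X w * N.rhs k x))
    (g := coeffYS k ⟨r₀.1, m⟩) (fun x => by rw [coeff_X_mul, coeff_rhs_expYS h1 hp])
    (fun w hw hwU => ?_) (fun x hx => Foreign.coeffYS_eq_zero (r := ⟨r₀.1, m⟩) hx k),
    coeffYS_apply_Y h1 hp]
  · ring
  by_cases hwY : w = N.Y r₀.1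
  · subst hwY
    rw [show single (N.S r₀.1 r₀.2) 1 + expYS ⟨r₀.1, m⟩ =
        single (N.Y r₀.1) 1 + (single (N.S r₀.1 m) 1 + single (N.S r₀.1 r₀.2) 1) by
      rw [expYS]; abel, coeff_X_mul]
    refine coeff_rhs_eq_zero (fun r h => ?_) (fun r h => ?_) k _
    · rcases (single_add_single_eq_single_add_single one_ne_zero one_ne_zero).1 h with
        ⟨hY, hS⟩ | ⟨-, hY, hS⟩ | ⟨h2, -⟩
      · exact hp.Y_ne_S_of_S_eq_S r.2.isLt.le r₀.2.isLt.le m.isLt.le hS hY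
      · exact hp.Y_ne_S_of_S_eq_S r.2.isLt.le m.isLt.le r₀.2.isLt.le hS hY
      · exact absurd h2 two_ne_zero
    · simpa [degree_expU] using congrArg degree h
  · refine coeff_X_mul_of_apply_eq_zero ?_ _
    simp [expYS, Ne.symm hwY, (hw m m.isLt.le).symm, (hw r₀.2 r₀.2.isLt.le).symm]

theorem rates_eq_of_deriv_eq (h1 : N.Assumption1) (hp : N.IsPartition part)
    {k₁ k₂ : N.Param → ℝ} (r₀ : N.Block) (ha : k₂ ⟨r₀.1, r₀.2, 0⟩ ≠ 0)
    (hd1 : N.deriv k₁ 1 (N.S r₀.1 r₀.2) = N.deriv k₂ 1 (N.S r₀.1 r₀.2))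
    (hd2 : N.deriv k₁ 2 (N.S r₀.1 r₀.2) = N.deriv k₂ 2 (N.S r₀.1 r₀.2)) :
    k₁ ⟨r₀.1, r₀.2, 1⟩ = k₂ ⟨r₀.1, r₀.2, 1⟩ ∧
      ∀ m : Fin (N.L r₀.1), k₁ ⟨r₀.1, m, 0⟩ = k₂ ⟨r₀.1, m, 0⟩ ∧
        k₁ ⟨r₀.1, m, 1⟩ + k₁ ⟨r₀.1, m, 2⟩ = k₂ ⟨r₀.1, m, 1⟩ + k₂ ⟨r₀.1, m, 2⟩ := by
  rw [deriv_one, deriv_one] at hd1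
  have ha₀ : k₁ ⟨r₀.1, r₀.2, 0⟩ = k₂ ⟨r₀.1, r₀.2, 0⟩ := by
    simpa [coeff_rhs_expYS h1 hp, coeffYS_apply_S h1 hp] using congrArg (coeff (expYS r₀)) hd1
  have hb₀ : k₁ ⟨r₀.1, r₀.2, 1⟩ = k₂ ⟨r₀.1, r₀.2, 1⟩ := by
    simpa [coeff_rhs_expU h1, coeffU_apply_S h1 hp] using congrArg (coeff (expU r₀)) hd1
  refine ⟨hb₀, fun m => ⟨?_, ?_⟩⟩
  · have h := congrArg (coeff (single (N.S r₀.1 r₀.2) 1 + expYS ⟨r₀.1, m⟩)) hd2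
    rw [coeff_single_add_expYS_deriv_two h1 hp, coeff_single_add_expYS_deriv_two h1 hp,
      ha₀] at h
    exact mul_left_cancel₀ ha h
  · have h := congrArg (coeff (single (N.S r₀.1 r₀.2) 1 + expU ⟨r₀.1, m⟩)) hd2
    rw [coeff_single_add_expU_deriv_two h1 hp, coeff_single_add_expU_deriv_two h1 hp,
      ha₀] at h
    exact mul_left_cancel₀ (neg_ne_zero.2 ha) h

/-- The second component is parametrized as an Assumption-1 component running from `S_L` to
`S_0`, so the tilde constants of paper index `j` are those of its block `L - j` (0-indexed):
`ã_L, b̃_L, c̃_L` are those of block `0`, and `ã_j, K̃_j` for `j = jj + 1 ≤ L - 1` those of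
block `L - 1 - jj`. -/
theorem tilde_constants_identifiable
    (N : A1Network σ) (h1 : N.Assumption1) (h2 : N.Assumption2)
    (i₁ i₂ : N.ι) (hL : N.L i₂ = N.L i₁)
    (hS : ∀ j, j ≤ N.L i₁ → N.S i₂ j = N.S i₁ (N.L i₁ - j)) :
    N.IdentifiableFrom
      (fun k =>
        (k ⟨i₂, ⟨0, by have := N.Lpos i₂; omega⟩, 0⟩,
         k ⟨i₂, ⟨0, by have := N.Lpos i₂; omega⟩, 1⟩,
         k ⟨i₂, ⟨0, by have := N.Lpos i₂; omega⟩, 2⟩,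
         fun jj : Fin (N.L i₁ - 1) =>
           k ⟨i₂, ⟨N.L i₁ - 1 - (jj : ℕ), by have := jj.isLt; omega⟩, 0⟩,
         fun jj : Fin (N.L i₁ - 1) =>
           k ⟨i₂, ⟨N.L i₁ - 1 - (jj : ℕ), by have := jj.isLt; omega⟩, 1⟩ +
             k ⟨i₂, ⟨N.L i₁ - 1 - (jj : ℕ), by have := jj.isLt; omega⟩, 2⟩))
      {N.S i₁ (N.L i₁)} 2 := by
  obtain ⟨part, hp⟩ := h2
  intro k₁ k₂ _ hk₂ hder
  let r₀ : N.Block := ⟨i₂, ⟨0, N.Lpos i₂⟩⟩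
  have hs : N.S i₁ (N.L i₁) = N.S r₀.1 r₀.2 := by simpa using (hS 0 (Nat.zero_le _)).symm
  obtain ⟨hb, hm⟩ := rates_eq_of_deriv_eq h1 hp r₀ (hk₂ _).ne'
    (hs ▸ hder _ rfl 1 le_rfl one_le_two) (hs ▸ hder _ rfl 2 one_le_two le_rfl)
  simp only [Prod.mk.injEq, funext_iff]
  exact ⟨(hm _).1, hb, by linarith [(hm r₀.2).2], fun jj => (hm _).1, fun jj => (hm _).2⟩

end A1Network
end
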